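/- arXiv:0901.1052 — 7 statements merged into one kernel-verified Lean document; each statement's English description precedes it below -/
import Mathlib

section
/- Let D := {(α,β) ∈ H×H : α ≤ β and φ(α) = φ(β)}, and let 𝒟_K(φ) (the doset Hibi ring defined by φ) be the K-subalgebra of K[T_x : x ∈ P] generated by {e(α)·e(β) : (α,β) ∈ D}. Then the underlying K-vector space of 𝒟_K(φ) is exactly the K-linear span of the monomials T^ν, where ν runs over all order reversing maps ν : P → ℕ such that ν(φ*(y)) is even for every join-irreducible element y of L (note that φ*(y) is a join-irreducible element of H for every such y). In particular, these monomials form a K-basis of 𝒟_K(φ). -/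
open scoped Classical

/-- An element `a` of a lattice is join-irreducible if `a = b ⊔ c` implies `a = b` or `a = c`
(in particular a minimum element is join-irreducible). -/
def JoinIrred {H : Type*} [Lattice H] (a : H) : Prop :=
  ∀ b c : H, a = b ⊔ c → a = b ∨ a = c

/-- For a surjective map `φ : H → L` from a finite lattice, `phistar φ hφ β` is the meet
of the (finite, nonempty) preimage `φ⁻¹(β)`. -/
noncomputable def phistar {H L : Type*} [Lattice H] [Fintype H] [DecidableEq L]
    (φ : H → L) (hφ : Function.Surjective φ) (β : L) : H :=
  (Finset.univ.filter fun α => φ α = β).inf'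
    (by obtain ⟨a, ha⟩ := hφ β; exact ⟨a, by simp [ha]⟩) id

/-- `hibiGen K α = ∏_{x ∈ P, x ≤ α} T_x`, the generator of the Hibi ring attached to `α ∈ H`,
an element of the polynomial ring `K[T_x : x ∈ P]` with `P` the join-irreducibles of `H`. -/
noncomputable def hibiGen {H : Type*} [DistribLattice H] [Fintype H] (K : Type*) [Field K]
    (α : H) : MvPolynomial {x : H // JoinIrred x} K :=
  ∏ x : {x : H // JoinIrred x}, if (x : H) ≤ α then MvPolynomial.X x else 1

/-- `Tpow K ν = T^ν = ∏_{x ∈ P} T_x ^ ν x`. -/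
noncomputable def Tpow {H : Type*} [DistribLattice H] [Fintype H] (K : Type*) [Field K]
    (ν : {x : H // JoinIrred x} → ℕ) : MvPolynomial {x : H // JoinIrred x} K :=
  ∏ x : {x : H // JoinIrred x}, MvPolynomial.X x ^ ν x

/-!
Monomials multiply by adding exponents, so by `Algebra.adjoin_eq_span` the theorem reduces to a
statement about exponents: the additive monoid of order reversing `ν : P → ℕ` that are even at
every `φ* y` is generated by the exponents `χ_α + χ_β` of the generators `e(α) e(β)`, where `χ_α`
(`downIndicator α`) is the indicator function of `{x ∈ P | x ≤ α}`.

Since `φ*` is left adjoint to `φ`, we have `φ* y ≤ α ↔ y ≤ φ α`, so `χ_α` and `χ_β` agree at every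
`φ* y` once `φ α = φ β`. Conversely, a nonzero admissible `ν` splits as `min 2 ν + (ν - min 2 ν)`,
and `min 2 ν = χ_α + χ_β` for `α = ⋁ {x | 2 ≤ ν x}` and `β = ⋁ {x | 1 ≤ ν x}`: join-irreducibles
of a distributive lattice are join-prime, so `x ≤ α ↔ 2 ≤ ν x` for `x ∈ P`. If `y ≤ φ β` is
join-irreducible then `ν (φ* y) ≥ 1`, hence `≥ 2` by parity, so `y ≤ φ α`; thus `φ α = φ β`.
-/

open Finset

section JoinIrred

variable {H : Type*}

lemma joinIrred_of_forall_le [Lattice H] {a : H} (h : ∀ b, a ≤ b) : JoinIrred a :=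
  fun b _ hbc => Or.inl (le_antisymm (h b) (hbc ▸ le_sup_left))

lemma joinIrred_bot [Lattice H] [OrderBot H] : JoinIrred (⊥ : H) :=
  joinIrred_of_forall_le fun _ => bot_le

lemma SupIrred.joinIrred [Lattice H] {a : H} (ha : SupIrred a) : JoinIrred a :=
  fun _ _ hbc => (ha.2 hbc.symm).imp Eq.symm Eq.symm

lemma JoinIrred.supPrime [DistribLattice H] {a : H} (ha : JoinIrred a) (hmin : ¬IsMin a) :
    SupPrime a :=
  supPrime_iff_supIrred.2 ⟨hmin, fun b c hbc => (ha b c hbc.symm).imp Eq.symm Eq.symm⟩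

lemma le_of_forall_joinIrred_le [Lattice H] [Fintype H] {a b : H}
    (h : ∀ y, JoinIrred y → y ≤ a → y ≤ b) : a ≤ b := by
  have : Nonempty H := ⟨a⟩
  have := Fintype.toOrderBot H
  obtain ⟨s, rfl, hs⟩ := exists_supIrred_decomposition a
  exact Finset.sup_le fun y hy => h y (hs hy).joinIrred (Finset.le_sup (f := id) hy)

end JoinIrred

section phistar

variable {H L : Type*} [Lattice H] [Lattice L] {φ : H → L}

lemma monotone_of_map_inf (hinf : ∀ a b, φ (a ⊓ b) = φ a ⊓ φ b) : Monotone φ :=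
  fun a b hab => by rw [← inf_eq_left, ← hinf, inf_eq_left.2 hab]

lemma joinIrred_map_bot [OrderBot H] (hφ : Function.Surjective φ)
    (hinf : ∀ a b, φ (a ⊓ b) = φ a ⊓ φ b) : JoinIrred (φ ⊥) :=
  joinIrred_of_forall_le fun b => by
    obtain ⟨a, rfl⟩ := hφ b
    exact monotone_of_map_inf hinf bot_le

variable [Fintype H] [DecidableEq L]

lemma map_phistar (hφ : Function.Surjective φ) (hinf : ∀ a b, φ (a ⊓ b) = φ a ⊓ φ b) (y : L) :
    φ (phistar φ hφ y) = y :=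
  Finset.inf'_induction (p := fun a => φ a = y) _ _
    (fun a ha b hb => by rw [hinf, ha, hb, inf_idem]) fun _ ha => (mem_filter.1 ha).2

lemma gc_phistar (hφ : Function.Surjective φ) (hinf : ∀ a b, φ (a ⊓ b) = φ a ⊓ φ b) :
    GaloisConnection (phistar φ hφ) φ := fun y γ =>
  ⟨fun h => map_phistar hφ hinf y ▸ monotone_of_map_inf hinf h,
    fun h => le_inf_iff.1 (Finset.inf'_le id
      (show phistar φ hφ y ⊓ γ ∈ univ.filter fun a => φ a = y by
        simp [hinf, map_phistar hφ hinf, inf_eq_left.2 h])) |>.2⟩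

lemma joinIrred_phistar (hφ : Function.Surjective φ) (hsup : ∀ a b, φ (a ⊔ b) = φ a ⊔ φ b)
    (hinf : ∀ a b, φ (a ⊓ b) = φ a ⊓ φ b) {y : L} (hy : JoinIrred y) :
    JoinIrred (phistar φ hφ y) := by
  intro b c h
  have hy' : y = φ b ⊔ φ c := by rw [← hsup, ← h, map_phistar hφ hinf]
  refine (hy _ _ hy').imp (fun hb => ?_) fun hc => ?_
  · exact le_antisymm ((gc_phistar hφ hinf).l_le hb.le) (h ▸ le_sup_left)
  · exact le_antisymm ((gc_phistar hφ hinf).l_le hc.le) (h ▸ le_sup_right)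

lemma phistar_map_bot [OrderBot H] (hφ : Function.Surjective φ)
    (hinf : ∀ a b, φ (a ⊓ b) = φ a ⊓ φ b) : phistar φ hφ (φ ⊥) = ⊥ :=
  le_bot_iff.1 ((gc_phistar hφ hinf).l_le le_rfl)

end phistar

section exponents

variable {H L : Type*} [DistribLattice H] {φ : H → L}

noncomputable def downIndicator (α : H) (x : {x : H // JoinIrred x}) : ℕ :=
  if (x : H) ≤ α then 1 else 0

lemma antitone_downIndicator (α : H) : Antitone (downIndicator α) := fun x y hxy => by
  by_cases hy : (y : H) ≤ α
  · simp [downIndicator, hy, (show (x : H) ≤ y from hxy).trans hy]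
  · simp [downIndicator, hy]

def dosetGenerators (φ : H → L) : Set ({x : H // JoinIrred x} → ℕ) :=
  {ν | ∃ α β, α ≤ β ∧ φ α = φ β ∧ ν = downIndicator α + downIndicator β}

variable [Fintype H] [Lattice L] [DecidableEq L]

def dosetExponents (φ : H → L) (hφ : Function.Surjective φ) :
    AddSubmonoid ({x : H // JoinIrred x} → ℕ) where
  carrier := {ν | Antitone ν ∧
    ∀ x : {x : H // JoinIrred x}, (∃ y, JoinIrred y ∧ (x : H) = phistar φ hφ y) → Even (ν x)}
  zero_mem' := ⟨antitone_const, fun _ _ => Even.zero⟩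
  add_mem' := fun ⟨hν, hνe⟩ ⟨hμ, hμe⟩ => ⟨hν.add hμ, fun x hx => (hνe x hx).add (hμe x hx)⟩

lemma dosetGenerators_subset (hφ : Function.Surjective φ)
    (hinf : ∀ a b, φ (a ⊓ b) = φ a ⊓ φ b) :
    dosetGenerators φ ⊆ dosetExponents φ hφ := by
  rintro _ ⟨α, β, -, hαβ, rfl⟩
  refine ⟨(antitone_downIndicator α).add (antitone_downIndicator β), ?_⟩
  rintro x ⟨y, -, hx⟩
  have : downIndicator α x = downIndicator β x := by
    simp only [downIndicator, hx, gc_phistar hφ hinf _ _, hαβ]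
  change Even (downIndicator α x + downIndicator β x)
  rw [this]
  exact Even.add_self _

lemma tsub_min_two_mem_dosetExponents {hφ : Function.Surjective φ} {ν}
    (hν : ν ∈ dosetExponents φ hφ) : (fun x => ν x - min 2 (ν x)) ∈ dosetExponents φ hφ := by
  refine ⟨fun x y hxy => ?_, fun x hx => ?_⟩
  · have := hν.1 hxy
    dsimp only
    omega
  · obtain ⟨k, hk⟩ := hν.2 x hx
    exact ⟨k - 1, by dsimp only; omega⟩

section threshold

variable [OrderBot H]

noncomputable def threshold (ν : {x : H // JoinIrred x} → ℕ) (k : ℕ) : H :=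
  (univ.filter fun x => k ≤ ν x).sup Subtype.val

lemma le_threshold_iff {ν : {x : H // JoinIrred x} → ℕ} (hν : Antitone ν) {k : ℕ}
    (hk : k ≤ ν ⟨⊥, joinIrred_bot⟩) (x : {x : H // JoinIrred x}) :
    (x : H) ≤ threshold ν k ↔ k ≤ ν x := by
  refine ⟨fun h => ?_, fun h => le_sup (f := Subtype.val) (mem_filter.2 ⟨mem_univ _, h⟩)⟩
  by_cases hx : IsMin (x : H)
  · rwa [show x = ⟨⊥, joinIrred_bot⟩ from Subtype.ext hx.eq_bot]
  · obtain ⟨q, hq, hxq⟩ := (x.2.supPrime hx).le_finset_sup.1 h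
    exact (mem_filter.1 hq).2.trans (hν hxq)

lemma min_two_mem_dosetGenerators [Fintype L] (hφ : Function.Surjective φ)
    (hsup : ∀ a b, φ (a ⊔ b) = φ a ⊔ φ b) (hinf : ∀ a b, φ (a ⊓ b) = φ a ⊓ φ b)
    {ν} (hν : ν ∈ dosetExponents φ hφ) (hne : ν ≠ 0) :
    (fun x => min 2 (ν x)) ∈ dosetGenerators φ := by
  have gc := gc_phistar hφ hinf
  have hbot : 2 ≤ ν ⟨⊥, joinIrred_bot⟩ := by
    obtain ⟨x₀, hx₀⟩ := Function.ne_iff.1 hne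
    have hle : ν x₀ ≤ ν ⟨⊥, joinIrred_bot⟩ := hν.1 (show (⊥ : H) ≤ x₀ from bot_le)
    obtain ⟨k, hk⟩ := hν.2 ⟨⊥, joinIrred_bot⟩
      ⟨φ ⊥, joinIrred_map_bot hφ hinf, (phistar_map_bot hφ hinf).symm⟩
    simp only [Pi.zero_apply] at hx₀
    omega
  have hα := le_threshold_iff hν.1 hbot
  have hβ := le_threshold_iff hν.1 (k := 1) (by omega)
  have hαβ : threshold ν 2 ≤ threshold ν 1 :=
    Finset.sup_le fun x hx => (hβ x).2 (by have := (mem_filter.1 hx).2; omega)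
  refine ⟨threshold ν 2, threshold ν 1, hαβ,
    le_antisymm (monotone_of_map_inf hinf hαβ) (le_of_forall_joinIrred_le fun y hy hyβ => ?_), ?_⟩
  · let x : {x : H // JoinIrred x} := ⟨phistar φ hφ y, joinIrred_phistar hφ hsup hinf hy⟩
    have h1 : 1 ≤ ν x := (hβ x).1 (gc.l_le hyβ)
    obtain ⟨k, hk⟩ := hν.2 x ⟨y, hy, rfl⟩
    exact gc.le_u ((hα x).2 (by omega))
  · funext x
    simp only [Pi.add_apply, downIndicator, hα, hβ]
    split_ifs <;> omega

end threshold

theorem closure_dosetGenerators [Fintype L] (hφ : Function.Surjective φ)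
    (hsup : ∀ a b, φ (a ⊔ b) = φ a ⊔ φ b) (hinf : ∀ a b, φ (a ⊓ b) = φ a ⊓ φ b) :
    AddSubmonoid.closure (dosetGenerators φ) = dosetExponents φ hφ := by
  refine le_antisymm (AddSubmonoid.closure_le.2 (dosetGenerators_subset hφ hinf))
    fun ν hν => ?_
  induction ν using WellFoundedLT.induction with
  | ind ν ih =>
  rcases eq_or_ne ν 0 with rfl | hne
  · exact zero_mem _
  obtain ⟨x₀, hx₀⟩ := Function.ne_iff.1 hne
  have : Nonempty H := ⟨x₀.1⟩
  have := Fintype.toOrderBot H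
  have hsplit : ν = (fun x => min 2 (ν x)) + fun x => ν x - min 2 (ν x) :=
    funext fun x => by simp only [Pi.add_apply]; omega
  have hlt : (fun x => ν x - min 2 (ν x)) < ν :=
    Pi.lt_def.2 ⟨fun x => Nat.sub_le _ _, x₀, by simp only [Pi.zero_apply] at hx₀; omega⟩
  rw [hsplit]
  exact add_mem
    (AddSubmonoid.subset_closure (min_two_mem_dosetGenerators hφ hsup hinf hν hne))
    (ih _ hlt (tsub_min_two_mem_dosetExponents hν))

end exponents

section Tpow

variable {H : Type*} [DistribLattice H] [Fintype H] (K : Type*) [Field K]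

lemma Tpow_zero : Tpow K (0 : {x : H // JoinIrred x} → ℕ) = 1 := by
  simp [Tpow]

lemma Tpow_add (ν μ : {x : H // JoinIrred x} → ℕ) :
    Tpow K (ν + μ) = Tpow K ν * Tpow K μ := by
  simp only [Tpow, Pi.add_apply, pow_add, prod_mul_distrib]

lemma hibiGen_eq_Tpow (α : H) : hibiGen K α = Tpow K (downIndicator α) :=
  prod_congr rfl fun x _ => by by_cases h : (x : H) ≤ α <;> simp [downIndicator, h]

lemma coe_closure_image_Tpow (S : Set ({x : H // JoinIrred x} → ℕ)) :
    (Submonoid.closure (Tpow K '' S) : Set (MvPolynomial {x : H // JoinIrred x} K)) =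
      Tpow K '' AddSubmonoid.closure S := by
  ext f
  constructor
  · intro hf
    induction hf using Submonoid.closure_induction with
    | mem f hf =>
      obtain ⟨ν, hν, rfl⟩ := hf
      exact ⟨ν, AddSubmonoid.subset_closure hν, rfl⟩
    | one => exact ⟨0, zero_mem _, Tpow_zero K⟩
    | mul f g _ _ hf hg =>
      obtain ⟨ν, hν, rfl⟩ := hf
      obtain ⟨μ, hμ, rfl⟩ := hg
      exact ⟨ν + μ, add_mem hν hμ, Tpow_add K ν μ⟩
  · rintro ⟨ν, hν, rfl⟩
    induction hν using AddSubmonoid.closure_induction with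
    | mem ν hν => exact Submonoid.subset_closure (Set.mem_image_of_mem _ hν)
    | zero => rw [Tpow_zero]; exact one_mem _
    | add ν μ _ _ hν hμ => rw [Tpow_add]; exact mul_mem hν hμ

lemma linearIndependent_Tpow : LinearIndependent K (Tpow K (H := H)) := by
  have hmon : Tpow K (H := H) =
      MvPolynomial.basisMonomials {x : H // JoinIrred x} K ∘ Finsupp.equivFunOnFinite.symm := by
    funext ν
    simp only [Function.comp_apply, MvPolynomial.coe_basisMonomials, MvPolynomial.monomial_eq,
      map_one, one_mul, Finsupp.prod_fintype _ _ fun _ => pow_zero _]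
    rfl
  rw [hmon]
  exact (MvPolynomial.basisMonomials {x : H // JoinIrred x} K).linearIndependent.comp _
    Finsupp.equivFunOnFinite.symm.injective

end Tpow

/-- The doset Hibi ring `𝒟_K(φ)`, i.e. the `K`-subalgebra of `K[T_x : x ∈ P]` generated by
the products `e(α)·e(β)` over all `α ≤ β` with `φ α = φ β`, coincides, as a `K`-submodule,
with the span of the monomials `T^ν` where `ν : P → ℕ` is order reversing and `ν (φ* y)` is
even for every join-irreducible `y` of `L`; moreover these monomials are linearly
independent over `K`, hence form a `K`-basis. -/
theorem stmt_2 {H L : Type*} [DistribLattice H] [Fintype H] [DistribLattice L] [Fintype L]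
    [DecidableEq L] (K : Type*) [Field K] (φ : H → L) (hφ : Function.Surjective φ)
    (hsup : ∀ a b : H, φ (a ⊔ b) = φ a ⊔ φ b) (hinf : ∀ a b : H, φ (a ⊓ b) = φ a ⊓ φ b) :
    ((Algebra.adjoin K {f : MvPolynomial {x : H // JoinIrred x} K |
          ∃ α β : H, α ≤ β ∧ φ α = φ β ∧ f = hibiGen K α * hibiGen K β}).toSubmodule =
      Submodule.span K {f : MvPolynomial {x : H // JoinIrred x} K |
        ∃ ν : {x : H // JoinIrred x} → ℕ,
          (∀ x y : {x : H // JoinIrred x}, (x : H) ≤ (y : H) → ν y ≤ ν x) ∧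
          (∀ x : {x : H // JoinIrred x},
            (∃ y : L, JoinIrred y ∧ (x : H) = phistar φ hφ y) → Even (ν x)) ∧
          f = Tpow K ν}) ∧
    LinearIndependent K (fun ν : {ν : {x : H // JoinIrred x} → ℕ //
        (∀ x y : {x : H // JoinIrred x}, (x : H) ≤ (y : H) → ν y ≤ ν x) ∧
        (∀ x : {x : H // JoinIrred x},
          (∃ y : L, JoinIrred y ∧ (x : H) = phistar φ hφ y) → Even (ν x))} =>
      Tpow K ν.1) := by
  have hgenerators : {f : MvPolynomial {x : H // JoinIrred x} K |
      ∃ α β : H, α ≤ β ∧ φ α = φ β ∧ f = hibiGen K α * hibiGen K β} =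
        Tpow K '' dosetGenerators φ := by
    ext f
    simp only [dosetGenerators, hibiGen_eq_Tpow, ← Tpow_add, Set.mem_image]
    constructor
    · rintro ⟨α, β, hαβ, hφαβ, rfl⟩
      exact ⟨_, ⟨α, β, hαβ, hφαβ, rfl⟩, rfl⟩
    · rintro ⟨_, ⟨α, β, hαβ, hφαβ, rfl⟩, rfl⟩
      exact ⟨α, β, hαβ, hφαβ, rfl⟩
  have hmonomials : {f : MvPolynomial {x : H // JoinIrred x} K |
      ∃ ν : {x : H // JoinIrred x} → ℕ,
        (∀ x y : {x : H // JoinIrred x}, (x : H) ≤ (y : H) → ν y ≤ ν x) ∧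
        (∀ x : {x : H // JoinIrred x},
          (∃ y : L, JoinIrred y ∧ (x : H) = phistar φ hφ y) → Even (ν x)) ∧
        f = Tpow K ν} = Tpow K '' dosetExponents φ hφ :=
    Set.ext fun _ => ⟨fun ⟨ν, hν, hνe, hf⟩ => ⟨ν, ⟨hν, hνe⟩, hf.symm⟩,
      fun ⟨ν, ⟨hν, hνe⟩, hf⟩ => ⟨ν, hν, hνe, hf.symm⟩⟩
  refine ⟨?_, (linearIndependent_Tpow K).comp _ Subtype.val_injective⟩
  rw [Algebra.adjoin_eq_span, hgenerators, coe_closure_image_Tpow,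
    closure_dosetGenerators hφ hsup hinf, hmonomials]
end

section
/- The m(m+1)/2 polynomials (WᵀW)_{ij} with 1 ≤ i ≤ j ≤ m are algebraically independent over K in K[W]. Equivalently, if T′ = (T′_{ij}) is the m×m symmetric matrix of indeterminates (with {T′_{ij} : 1 ≤ i ≤ j ≤ m} independent indeterminates and T′_{ji} := T′_{ij}), then the K-algebra homomorphism from the polynomial ring K[T′_{ij} : 1 ≤ i ≤ j ≤ m] to K[W] sending T′_{ij} to (WᵀW)_{ij} is injective, and hence induces an isomorphism K[T′] ≅ K[WᵀW]. -/
/-!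
Specialise `W` to its upper triangular part `U` (set `W_{ki} = 0` for `k > i`); it suffices to
show that the entries of `UᵀU` above the diagonal are algebraically independent. For `i ≤ j`,
`(UᵀU)_{ij} = U_{ii} U_{ij} + ∑_{r < i} U_{ri} U_{rj}`, and the entries `(UᵀU)_{kl}` with
`(k, l) < (i, j)` lexicographically do not involve the variable `W_{ij}`. So each entry is a
polynomial of positive degree in `W_{ij}` (`W_{ii}^2` or `W_{ii} W_{ij}`) with coefficients in the
polynomials not involving `W_{ij}`, hence transcendental over the algebra generated by its
predecessors, and these triangular transcendence conditions give algebraic independence.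
-/

open MvPolynomial Matrix

noncomputable def Wsq (K : Type) [Field K] (m : ℕ) :
    Matrix (Fin m) (Fin m) (MvPolynomial (Fin m × Fin m) K) :=
  fun i j => X (i, j)

theorem algebraicIndependent_of_transcendental_adjoin_lt {ι κ R A : Type*} [Finite ι]
    [LinearOrder κ] [CommRing R] [CommRing A] [Algebra R A] {x : ι → A}
    (rank : ι → κ) (hrank : Function.Injective rank)
    (hinj : Function.Injective (algebraMap R A))
    (H : ∀ i, Transcendental (Algebra.adjoin R (x '' {j | rank j < rank i})) (x i)) :
    AlgebraicIndependent R x := by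
  classical
  have : Fintype ι := Fintype.ofFinite ι
  rw [← AlgebraicIndepOn.univ, ← Finset.coe_univ]
  induction (Finset.univ : Finset ι) using Finset.induction_on_max_value rank with
  | empty => rw [Finset.coe_empty]; exact algebraicIndependent_empty_type_iff.mpr hinj
  | insert a s ha hmax ih =>
    rw [Finset.coe_insert]
    refine ih.insert ((H a).of_tower_top_of_subalgebra_le
      (Algebra.adjoin_mono (Set.image_mono fun j hj => ?_)))
    exact (hmax j hj).lt_of_ne (hrank.ne fun h => ha (h ▸ hj))

theorem transcendental_supported_mul_X_pow_add {σ R : Type*} [CommRing R] [IsDomain R]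
    {s : Set σ} {v : σ} (hv : v ∉ s) {c g : MvPolynomial σ R} (hc : c ∈ supported R s)
    (hc0 : c ≠ 0) (hg : g ∈ supported R s) {d : ℕ} (hd : d ≠ 0) :
    Transcendental (supported R s) (c * X v ^ d + g) := by
  set c' : supported R s := ⟨c, hc⟩
  set g' : supported R s := ⟨g, hg⟩
  have hc0' : c' ≠ 0 := fun h => hc0 congr($(h).1)
  have hdeg : (Polynomial.C g' : Polynomial (supported R s)).degree <
      (Polynomial.C c' * Polynomial.X ^ d).degree := by
    rw [Polynomial.degree_C_mul_X_pow d hc0']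
    exact Polynomial.degree_C_le.trans_lt (by exact_mod_cast Nat.pos_of_ne_zero hd)
  have heval : Polynomial.aeval (X v) (Polynomial.C c' * Polynomial.X ^ d + Polynomial.C g') =
      c * X v ^ d + g := by
    simp [c', g']
  rw [← heval]
  exact (transcendental_supported_X R hv).aeval _
    (by rw [add_comm, Polynomial.natDegree_add_eq_right_of_degree_lt hdeg,
      Polynomial.natDegree_C_mul_X_pow d _ hc0']; exact hd)
    (by rw [add_comm, Polynomial.leadingCoeff_add_of_degree_lt hdeg,
      Polynomial.leadingCoeff_C_mul_X_pow]; exact mem_nonZeroDivisors_of_ne_zero hc0')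

noncomputable def upperWsq (R : Type*) [CommRing R] (m : ℕ) :
    Matrix (Fin m) (Fin m) (MvPolynomial (Fin m × Fin m) R) :=
  fun k i => if k ≤ i then X (k, i) else 0

section UpperWsq

variable (R : Type*) [CommRing R] {m : ℕ}

theorem upperWsq_transpose_mul_self_mem_supported (k l : Fin m) :
    ((upperWsq R m)ᵀ * upperWsq R m) k l ∈
      supported R {w | w.1 ≤ k ∧ (w.2 = k ∨ w.2 = l)} := by
  rw [Matrix.mul_apply]
  refine Subalgebra.sum_mem _ fun r _ => ?_
  simp only [transpose_apply, upperWsq]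
  split_ifs with hk
  · exact Subalgebra.mul_mem _ (Algebra.subset_adjoin ⟨_, ⟨hk, .inl rfl⟩, rfl⟩)
      (Algebra.subset_adjoin ⟨_, ⟨hk, .inr rfl⟩, rfl⟩)
  all_goals simp only [mul_zero, zero_mul, zero_mem]

theorem upperWsq_transpose_mul_self_eq {i j : Fin m} (hij : i ≤ j) :
    ((upperWsq R m)ᵀ * upperWsq R m) i j =
      X (i, i) * X (i, j) + ∑ r ∈ Finset.Iio i, X (r, i) * X (r, j) := by
  have hterm : ∀ r, (upperWsq R m)ᵀ i r * upperWsq R m r j =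
      if r ≤ i then X (r, i) * X (r, j) else 0 := fun r => by
    by_cases hr : r ≤ i
    · simp only [transpose_apply, upperWsq, if_pos hr, if_pos (hr.trans hij)]
    · simp only [transpose_apply, upperWsq, if_neg hr, zero_mul]
  rw [Matrix.mul_apply, Finset.sum_congr rfl fun r _ => hterm r, ← Finset.sum_filter,
    Finset.filter_ge_eq_Iic, ← Finset.Iio_insert, Finset.sum_insert Finset.notMem_Iio_self]

theorem transcendental_upperWsq_transpose_mul_self [IsDomain R] {i j : Fin m} (hij : i ≤ j) :
    Transcendental (supported R {w | w ≠ (i, j)}) (((upperWsq R m)ᵀ * upperWsq R m) i j) := by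
  have hmem : (i, j) ∉ {w : Fin m × Fin m | w ≠ (i, j)} := fun h => h rfl
  have hlower : ∑ r ∈ Finset.Iio i, X (r, i) * X (r, j) ∈
      supported R {w : Fin m × Fin m | w ≠ (i, j)} :=
    Subalgebra.sum_mem _ fun r hr => Subalgebra.mul_mem _
      (X_mem_supported.2 fun h => (Finset.mem_Iio.1 hr).ne congr($(h).1))
      (X_mem_supported.2 fun h => (Finset.mem_Iio.1 hr).ne congr($(h).1))
  rw [upperWsq_transpose_mul_self_eq R hij]
  rcases hij.eq_or_lt with rfl | hlt
  · simpa [← sq] using transcendental_supported_mul_X_pow_add hmem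
      (Subalgebra.one_mem _) one_ne_zero hlower two_ne_zero
  · simpa using transcendental_supported_mul_X_pow_add hmem
      (X_mem_supported.2 fun h => hlt.ne (Prod.ext_iff.1 h).2) (X_ne_zero _) hlower one_ne_zero

end UpperWsq

theorem aeval_upperWsq_transpose_mul_self (K : Type) [Field K] {m : ℕ} (i j : Fin m) :
    aeval (fun w => upperWsq K m w.1 w.2) (((Wsq K m)ᵀ * Wsq K m) i j) =
      ((upperWsq K m)ᵀ * upperWsq K m) i j := by
  simp only [Matrix.mul_apply, transpose_apply, Wsq, map_sum, map_mul, aeval_X]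

theorem stmt_6_general (K : Type) [Field K] (m : ℕ) :
    AlgebraicIndependent K
      (fun p : {p : Fin m × Fin m // p.1 ≤ p.2} =>
        ((Wsq K m)ᵀ * Wsq K m) p.1.1 p.1.2) := by
  refine AlgebraicIndependent.of_comp (aeval fun w => upperWsq K m w.1 w.2) ?_
  simp only [Function.comp_def, aeval_upperWsq_transpose_mul_self]
  refine algebraicIndependent_of_transcendental_adjoin_lt (fun p => toLex p.1)
    (toLex.injective.comp Subtype.val_injective) (algebraMap K _).injective ?_
  rintro ⟨⟨i, j⟩, hij⟩
  refine (transcendental_upperWsq_transpose_mul_self K hij).of_tower_top_of_subalgebra_le ?_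
  rw [Algebra.adjoin_le_iff]
  rintro _ ⟨⟨⟨k, l⟩, hkl⟩, hlt, rfl⟩
  refine supported_mono ?_ (upperWsq_transpose_mul_self_mem_supported K k l)
  rintro _ ⟨hik, hj⟩ rfl
  have hlex : k < i ∨ k = i ∧ l < j := Prod.Lex.lt_iff.1 hlt
  dsimp only at hij hkl hik hj
  omega

/-- The `m(m+1)/2` entries `(WᵀW)_{ij}` with `i ≤ j` are algebraically independent over
`K`; equivalently, the `K`-algebra map `K[T′_{ij} : 1 ≤ i ≤ j ≤ m] → K[W]`,
`T′_{ij} ↦ (WᵀW)_{ij}`, is injective, hence induces an isomorphism `K[T′] ≅ K[WᵀW]`. -/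
theorem stmt_6 (K : Type) [Field K] (m : ℕ) (hm : 1 ≤ m) :
    AlgebraicIndependent K
      (fun p : {p : Fin m × Fin m // p.1 ≤ p.2} =>
        ((Wsq K m)ᵀ * Wsq K m) p.1.1 p.1.2) :=
  stmt_6_general K m
end

section
/- For every 1 ≤ r ≤ m and all indices 1 ≤ c₁ < ⋯ < c_r ≤ m and 1 ≤ d₁ < ⋯ < d_r ≤ n satisfying d_j ≥ b_j for all j = 1, …, r (i.e. [c₁,…,c_r | d₁,…,d_r] ∈ Δ(m×n;γ*)), the leading monomial of the minor [c₁,…,c_r | d₁,…,d_r]_{Z_γ} of Z_γ = W·U_γ is lm([c₁,…,c_r | d₁,…,d_r]_{Z_γ}) = ∏_{j=1}^{r} W_{c_j, j} · U_{j, d_j}. -/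
open MvPolynomial Matrix

/-- The variables `W_{ij}`, `U_{ij}` (a type synonym carrying the variable order
`W₁₁ > W₂₁ > ⋯ > W_{mm} > U_{1,1} > ⋯ > U_{m,n}`, most significant variable smallest). -/
def MyVar (m n : ℕ) : Type := (Fin m × Fin m) ⊕ (Fin m × Fin n)

/-- The variable `W_{ij}`. -/
def wvar {m n : ℕ} (i j : Fin m) : MyVar m n := Sum.inl (i, j)

/-- The variable `U_{ij}`. -/
def uvar {m n : ℕ} (i : Fin m) (j : Fin n) : MyVar m n := Sum.inr (i, j)

/-- Rank of a variable in the significance list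
`W₁₁ > W₂₁ > ⋯ > W_{m1} > W₁₂ > ⋯ > W_{mm} > U_{1,1} > U_{1,2} > ⋯ > U_{1,n} > U_{2,1} > ⋯`. -/
def varRank (m n : ℕ) : MyVar m n → ℕ := fun v =>
  match v with
  | Sum.inl (i, j) => (i : ℕ) + (j : ℕ) * m
  | Sum.inr (i, j) => m * m + ((j : ℕ) + (i : ℕ) * n)

theorem varRank_injective (m n : ℕ) : Function.Injective (varRank m n) := by
  have key : ∀ (k : ℕ) (i i' : Fin k) (a a' : ℕ), (i : ℕ) + a * k = (i' : ℕ) + a' * k →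
      (i : ℕ) = i' ∧ a = a' := by
    intro k i i' a a' h
    have hk : 0 < k := i.pos
    have h1 : (i : ℕ) = (i' : ℕ) := by
      have := congrArg (· % k) h
      simpa [Nat.add_mul_mod_self_right, Nat.mod_eq_of_lt i.isLt,
        Nat.mod_eq_of_lt i'.isLt] using this
    refine ⟨h1, ?_⟩
    rw [h1] at h
    exact Nat.eq_of_mul_eq_mul_right hk (Nat.add_left_cancel h)
  have hlt : ∀ (i j : Fin m), (i : ℕ) + (j : ℕ) * m < m * m := by
    intro i j
    calc (i : ℕ) + (j : ℕ) * m < m + (j : ℕ) * m := by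
          exact Nat.add_lt_add_right i.isLt _
    _ = ((j : ℕ) + 1) * m := by ring
    _ ≤ m * m := Nat.mul_le_mul_right m j.isLt
  rintro (⟨i, j⟩ | ⟨i, j⟩) (⟨i', j'⟩ | ⟨i', j'⟩) h <;> simp only [varRank] at h
  · obtain ⟨h1, h2⟩ := key m i i' j j' h
    have hi : i = i' := Fin.ext h1
    have hj : j = j' := Fin.ext h2
    rw [hi, hj]
  · exact absurd h (by have := hlt i j; omega)
  · exact absurd h.symm (by have := hlt i' j'; omega)
  · have h' : (j : ℕ) + (i : ℕ) * n = (j' : ℕ) + (i' : ℕ) * n := Nat.add_left_cancel h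
    obtain ⟨h1, h2⟩ := key n j j' i i' h'
    have hi : i = i' := Fin.ext h2
    have hj : j = j' := Fin.ext h1
    rw [hi, hj]

/-- The variable order (most significant variable least). -/
instance (m n : ℕ) : LinearOrder (MyVar m n) :=
  LinearOrder.lift' (varRank m n) (varRank_injective m n)

/-- The degree lexicographic order on monomials: first compare total degrees, then
compare lexicographically (a monomial is larger if it has larger exponent at the most
significant, i.e. least, variable where they differ). -/
def degLexLt {σ : Type*} [LinearOrder σ] (a b : σ →₀ ℕ) : Prop :=
  (a.sum fun _ e => e) < (b.sum fun _ e => e) ∨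
    ((a.sum fun _ e => e) = (b.sum fun _ e => e) ∧ toLex a < toLex b)

/-- `d` is the leading monomial (exponent vector) of `f` for the degree lexicographic
order: it occurs in `f` and strictly dominates every other monomial of `f`. -/
def IsLeadingMonomial {σ : Type*} [LinearOrder σ] {K : Type*} [CommSemiring K]
    (f : MvPolynomial σ K) (d : σ →₀ ℕ) : Prop :=
  d ∈ f.support ∧ ∀ d' ∈ f.support, d' ≠ d → degLexLt d' d

/-- The `m × m` matrix `W` of indeterminates. -/
noncomputable def Wmat (K : Type) [Field K] (m n : ℕ) :
    Matrix (Fin m) (Fin m) (MvPolynomial (MyVar m n) K) :=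
  fun i j => X (wvar i j)

/-- The `m × n` matrix `U_γ` whose `(i,j)` entry is the indeterminate `U_{ij}` when
`j ≥ b i` and `0` otherwise. -/
noncomputable def Umat (K : Type) [Field K] (m n : ℕ) (b : Fin m → Fin n) :
    Matrix (Fin m) (Fin n) (MvPolynomial (MyVar m n) K) :=
  fun i j => if b i ≤ j then X (uvar i j) else 0

/-- `Z_γ := W · U_γ`. -/
noncomputable def Zmat (K : Type) [Field K] (m n : ℕ) (b : Fin m → Fin n) :
    Matrix (Fin m) (Fin n) (MvPolynomial (MyVar m n) K) :=
  Wmat K m n * Umat K m n b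

/-!
Writing the minor as `det (W[c, ·] · U_γ[·, d])` and expanding gives
`∑ₖ (∏ⱼ U_γ[kⱼ, dⱼ]) · det W[c, k]`. The terms with non-injective `k` vanish since `W[c, k]` then
has two equal columns; the others are signed monomials `∏ᵢ W_{cᵢ, k(σ i)} · ∏ⱼ U_{kⱼ, dⱼ}`, all of
degree `2r`. Unless `k = σ = id`, such a monomial is lexicographically smaller than the diagonal
one: if `k ∘ σ` moves some index, the two first differ at `W_{c_t, t}` for the least moved `t`;
otherwise they first differ at `U_{s, d_s}` for the least `s` moved by `k`. So the diagonal
monomial occurs with coefficient `1` and dominates every other monomial of the minor.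
-/

namespace Matrix

variable {R : Type*} [CommRing R] {n m : Type*} [Fintype n] [DecidableEq n]

theorem det_mul_eq_sum_prod_mul_det_submatrix [Fintype m] (A : Matrix n m R) (B : Matrix m n R) :
    (A * B).det = ∑ k : n → m, (∏ j, B (k j) j) * (A.submatrix id k).det := by
  simp only [det_apply', mul_apply, Finset.prod_univ_sum, Finset.mul_sum, Fintype.piFinset_univ,
    submatrix_apply, id, Finset.prod_mul_distrib]
  rw [Finset.sum_comm]
  refine Finset.sum_congr rfl fun k _ => Finset.sum_congr rfl fun σ _ => ?_
  ring

theorem det_submatrix_eq_zero_of_not_injective (A : Matrix n m R) {k : n → m}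
    (hk : ¬ Function.Injective k) : (A.submatrix id k).det = 0 := by
  obtain ⟨i, j, hij, hne⟩ := Function.not_injective_iff.mp hk
  exact det_zero_of_column_eq hne fun l => by simp [hij]

end Matrix

section DiagonalExponent

open Finset

variable {σ : Type*} [LinearOrder σ] {M N r : ℕ}

/-- The exponent of `∏ᵢ x_{e (pᵢ, qᵢ)}`. -/
noncomputable def diagExp (e : Fin M ×ₗ Fin N ↪o σ) (p : Fin r → Fin M) (q : Fin r → Fin N) :
    σ →₀ ℕ :=
  ∑ i, Finsupp.single (e (toLex (p i, q i))) 1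

variable (e : Fin M ×ₗ Fin N ↪o σ) (p : Fin r → Fin M) (q : Fin r → Fin N)

theorem diagExp_apply_embedding (z : Fin M ×ₗ Fin N) :
    diagExp e p q (e z) = #{i | toLex (p i, q i) = z} := by
  classical
  simp [diagExp, Finsupp.finsetSum_apply, Finsupp.single_apply, e.injective.eq_iff]

theorem diagExp_apply_of_notMem_range {x : σ} (hx : x ∉ Set.range e) :
    diagExp e p q x = 0 := by
  classical
  simp only [diagExp, Finsupp.finsetSum_apply, Finsupp.single_apply]
  exact Finset.sum_eq_zero fun i _ => if_neg fun h => hx ⟨_, h⟩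

theorem degree_diagExp : (diagExp e p q).degree = r := by
  simp [diagExp]

/-- The witness is `e (t, q t)` for the least `t` moved by `p`. -/
theorem exists_diagExp_lt (hrM : r ≤ M) {p : Fin r → Fin M} (hp : Function.Injective p)
    {q : Fin r → Fin N} (hq : StrictMono q) (hne : p ≠ Fin.castLE hrM) :
    ∃ z, diagExp e p q (e z) < diagExp e (Fin.castLE hrM) q (e z) ∧
      ∀ x < e z, diagExp e p q x = diagExp e (Fin.castLE hrM) q x := by
  set ι : Fin r → Fin M := Fin.castLE hrM
  obtain ⟨t, ht, hmin⟩ := WellFounded.has_min wellFounded_lt {i | p i ≠ ι i}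
    (Function.ne_iff.mp hne)
  replace ht : p t ≠ ι t := ht
  replace hmin : ∀ i < t, p i = ι i := fun i hi => not_not.mp fun h => hmin i h hi
  have hfix_of_lt : ∀ i, p i < ι t → p i = ι i := by
    intro i hi
    have hi' : (p i : ℕ) < t := by simpa [ι, Fin.lt_def] using hi
    have hai : p ⟨p i, hi'.trans t.isLt⟩ = p i := by rw [hmin _ hi']; rfl
    rw [← hp hai, hai]
    rfl
  have hlt_of_eq : ∀ i, p i = ι t → t < i := by
    intro i hi
    refine lt_of_le_of_ne (not_lt.mp fun hit => ?_) fun hti => ht (hti ▸ hi)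
    exact hit.ne (Fin.castLE_injective hrM ((hmin i hit).symm.trans hi))
  refine ⟨toLex (ι t, q t), ?_, fun x hx => ?_⟩
  · have hp_off : ∀ i, ¬ (p i = ι t ∧ q i = q t) := fun i ⟨h1, h2⟩ => ht (hq.injective h2 ▸ h1)
    have hι_at : ∀ i, (ι i = ι t ∧ q i = q t) ↔ i = t := fun i =>
      ⟨fun h => hq.injective h.2, fun h => h ▸ ⟨rfl, rfl⟩⟩
    simp [diagExp_apply_embedding, hp_off, hι_at, filter_eq']
  by_cases hxe : x ∈ Set.range e
  · obtain ⟨z, rfl⟩ := hxe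
    obtain ⟨⟨a, col⟩, rfl⟩ : ∃ w, toLex w = z := ⟨ofLex z, rfl⟩
    rw [e.lt_iff_lt, Prod.Lex.toLex_lt_toLex] at hx
    simp only [diagExp_apply_embedding, toLex_inj, Prod.mk.injEq]
    congr 1
    refine filter_congr fun i _ => ?_
    rcases hx with ha | ⟨rfl, hcol⟩
    · constructor
      · rintro ⟨rfl, h2⟩
        exact ⟨(hfix_of_lt i ha).symm, h2⟩
      · rintro ⟨rfl, h2⟩
        exact ⟨hmin i ha, h2⟩
    · constructor
      · rintro ⟨h1, rfl⟩
        exact absurd (hq (hlt_of_eq i h1)) hcol.not_gt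
      · rintro ⟨h1, rfl⟩
        obtain rfl := Fin.castLE_injective hrM h1
        exact absurd hcol (lt_irrefl _)
  · rw [diagExp_apply_of_notMem_range _ _ _ hxe, diagExp_apply_of_notMem_range _ _ _ hxe]

theorem Nat.add_mul_lt_add_mul_of_lex {M a a' i i' : ℕ} (hi : i < M)
    (h : a < a' ∨ a = a' ∧ i < i') : i + a * M < i' + a' * M := by
  rcases h with ha | ⟨rfl, hi'⟩
  · calc i + a * M < (a + 1) * M := by linarith
      _ ≤ a' * M := Nat.mul_le_mul_right M ha
      _ ≤ i' + a' * M := Nat.le_add_left _ _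
  · omega

section MinorTermExp

variable {m n : ℕ}

/-- `W_{ia}` as the pair `(a, i)`: the `W`-variables are ordered column by column. -/
def wvarEmb (m n : ℕ) : Fin m ×ₗ Fin m ↪o MyVar m n :=
  OrderEmbedding.ofStrictMono (fun z => wvar (ofLex z).2 (ofLex z).1) fun z _ h =>
    Nat.add_mul_lt_add_mul_of_lex (ofLex z).2.isLt
      ((Prod.Lex.toLex_lt_toLex.mp h).imp id (And.imp (congrArg Fin.val) id))

def uvarEmb (m n : ℕ) : Fin m ×ₗ Fin n ↪o MyVar m n :=
  OrderEmbedding.ofStrictMono (fun z => uvar (ofLex z).1 (ofLex z).2) fun z _ h =>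
    Nat.add_lt_add_left (Nat.add_mul_lt_add_mul_of_lex (ofLex z).2.isLt
      ((Prod.Lex.toLex_lt_toLex.mp h).imp id (And.imp (congrArg Fin.val) id))) _

theorem wvar_lt_uvar (i a i' : Fin m) (j : Fin n) : (wvar i a : MyVar m n) < uvar i' j :=
  calc varRank m n (wvar i a) < 0 + m * m := Nat.add_mul_lt_add_mul_of_lex i.isLt (Or.inl a.isLt)
    _ ≤ varRank m n (uvar i' j) := by simp [varRank, uvar]

variable {r : ℕ} (c : Fin r → Fin m) (d : Fin r → Fin n)

/-- The exponent of `∏ᵢ W_{cᵢ, pᵢ} · ∏ⱼ U_{kⱼ, dⱼ}`. -/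
noncomputable def minorTermExp (p k : Fin r → Fin m) : MyVar m n →₀ ℕ :=
  diagExp (wvarEmb m n) p c + diagExp (uvarEmb m n) k d

theorem degree_minorTermExp (p k : Fin r → Fin m) : (minorTermExp c d p k).degree = 2 * r := by
  rw [minorTermExp, map_add, degree_diagExp, degree_diagExp, two_mul]

variable {c d}

theorem minorTermExp_lt (hrm : r ≤ m) (hc : StrictMono c) (hd : StrictMono d)
    {p k : Fin r → Fin m} (hp : Function.Injective p) (hk : Function.Injective k)
    (hne : p ≠ Fin.castLE hrm ∨ k ≠ Fin.castLE hrm) :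
    toLex (minorTermExp c d p k) < toLex (minorTermExp c d (Fin.castLE hrm) (Fin.castLE hrm)) := by
  rw [Finsupp.Lex.lt_iff]
  by_cases hpι : p = Fin.castLE hrm
  · subst hpι
    obtain ⟨z, hz, hbelow⟩ :=
      exists_diagExp_lt (uvarEmb m n) hrm hk hd (hne.resolve_left (not_not.mpr rfl))
    refine ⟨uvarEmb m n z, fun x hx => ?_, ?_⟩
    · simp [minorTermExp, hbelow x hx]
    · simpa [minorTermExp] using hz
  · obtain ⟨z, hz, hbelow⟩ := exists_diagExp_lt (wvarEmb m n) hrm hp hc hpι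
    have hU : ∀ x ≤ wvarEmb m n z, ∀ k' : Fin r → Fin m, diagExp (uvarEmb m n) k' d x = 0 := by
      refine fun x hx k' => diagExp_apply_of_notMem_range _ _ _ ?_
      rintro ⟨z', rfl⟩
      exact hx.not_gt (wvar_lt_uvar _ _ _ _)
    refine ⟨wvarEmb m n z, fun x hx => ?_, ?_⟩
    · simp [minorTermExp, hbelow x hx, hU x hx.le]
    · simpa [minorTermExp, hU _ le_rfl] using hz

theorem minorTermExp_comp_perm_lt (hrm : r ≤ m) (hc : StrictMono c) (hd : StrictMono d)
    {k : Fin r → Fin m} (hk : Function.Injective k) {σ : Equiv.Perm (Fin r)}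
    (hne : k ≠ Fin.castLE hrm ∨ σ ≠ 1) :
    toLex (minorTermExp c d (k ∘ σ) k) <
      toLex (minorTermExp c d (Fin.castLE hrm) (Fin.castLE hrm)) := by
  refine minorTermExp_lt hrm hc hd (hk.comp σ.injective) hk ?_
  by_cases hkι : k = Fin.castLE hrm
  · subst hkι
    refine Or.inl fun h => hne.resolve_left (not_not.mpr rfl) (Equiv.ext fun i => ?_)
    exact Fin.castLE_injective hrm (congrFun h i)
  · exact Or.inr hkι

end MinorTermExp

section Minor

open Finset MvPolynomial Matrix

variable {K : Type} [Field K] {m n r : ℕ}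

theorem MvPolynomial.prod_X_eq_monomial {σ ι R : Type*} [CommSemiring R] (s : Finset ι)
    (v : ι → σ) : ∏ i ∈ s, (X (v i) : MvPolynomial σ R) = monomial (∑ i ∈ s, .single (v i) 1) 1 :=
  (monomial_sum_one s _).symm

theorem prod_Umat_submatrix (b : Fin m → Fin n) (d : Fin r → Fin n) (k : Fin r → Fin m) :
    ∏ j, (Umat K m n b).submatrix id d (k j) j =
      if ∀ j, b (k j) ≤ d j then monomial (diagExp (uvarEmb m n) k d) 1 else 0 := by
  simp only [submatrix_apply, id, Umat, Fintype.prod_ite_zero, prod_X_eq_monomial]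
  rfl

theorem det_Wmat_submatrix (c : Fin r → Fin m) (k : Fin r → Fin m) :
    ((Wmat K m n).submatrix c k).det =
      ∑ σ : Equiv.Perm (Fin r),
        monomial (diagExp (wvarEmb m n) (k ∘ σ) c) (Equiv.Perm.sign σ : K) := by
  rw [← det_transpose, det_apply]
  refine sum_congr rfl fun σ _ => ?_
  simp only [transpose_apply, submatrix_apply, Wmat, prod_X_eq_monomial, Units.smul_def,
    smul_monomial, zsmul_one]
  rfl

theorem det_minor_eq_sum (b : Fin m → Fin n) (c : Fin r → Fin m) (d : Fin r → Fin n) :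
    (Matrix.of fun i j : Fin r => Zmat K m n b (c i) (d j)).det =
      ∑ k : Fin r → Fin m, ∑ σ : Equiv.Perm (Fin r), monomial (minorTermExp c d (k ∘ σ) k)
        (if Function.Injective k ∧ ∀ j, b (k j) ≤ d j then (Equiv.Perm.sign σ : K) else 0) := by
  have hZ : Matrix.of (fun i j : Fin r => Zmat K m n b (c i) (d j)) =
      (Wmat K m n).submatrix c id * (Umat K m n b).submatrix id d :=
    (submatrix_mul (Wmat K m n) (Umat K m n b) c id d Function.bijective_id).symm
  rw [hZ, det_mul_eq_sum_prod_mul_det_submatrix]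
  refine sum_congr rfl fun k _ => ?_
  by_cases hk : Function.Injective k
  · rw [prod_Umat_submatrix, submatrix_submatrix, Function.id_comp, Function.comp_id,
      det_Wmat_submatrix]
    split_ifs with hb hkb hkb
    · simp only [mul_sum, monomial_mul, one_mul, minorTermExp, add_comm]
    · exact absurd ⟨hk, hb⟩ hkb
    · exact absurd hkb.2 hb
    · simp
  · rw [det_submatrix_eq_zero_of_not_injective _ hk, mul_zero]
    simp [hk]

theorem coeff_det_minor (b : Fin m → Fin n) (c : Fin r → Fin m) (d : Fin r → Fin n)
    (μ : MyVar m n →₀ ℕ) :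
    coeff μ (Matrix.of fun i j : Fin r => Zmat K m n b (c i) (d j)).det =
      ∑ k : Fin r → Fin m, ∑ σ : Equiv.Perm (Fin r), if minorTermExp c d (k ∘ σ) k = μ then
        (if Function.Injective k ∧ ∀ j, b (k j) ≤ d j then (Equiv.Perm.sign σ : K) else 0)
        else 0 := by
  simp only [det_minor_eq_sum, coeff_sum, coeff_monomial]

variable {b : Fin m → Fin n} {c : Fin r → Fin m} {d : Fin r → Fin n}

theorem coeff_det_minor_diagonal (hrm : r ≤ m) (hc : StrictMono c) (hd : StrictMono d)
    (hbd : ∀ j : Fin r, b (Fin.castLE hrm j) ≤ d j) :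
    coeff (minorTermExp c d (Fin.castLE hrm) (Fin.castLE hrm))
      (Matrix.of fun i j : Fin r => Zmat K m n b (c i) (d j)).det = 1 := by
  have hvanish : ∀ (k : Fin r → Fin m) (σ : Equiv.Perm (Fin r)), k ≠ Fin.castLE hrm ∨ σ ≠ 1 →
      (if minorTermExp c d (k ∘ σ) k = minorTermExp c d (Fin.castLE hrm) (Fin.castLE hrm) then
        (if Function.Injective k ∧ ∀ j, b (k j) ≤ d j then (Equiv.Perm.sign σ : K) else 0)
        else 0) = 0 := by
    intro k σ hne
    split_ifs with hT hk
    exacts [absurd hT (minorTermExp_comp_perm_lt hrm hc hd hk.1 hne).ne, rfl, rfl]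
  rw [coeff_det_minor, Fintype.sum_eq_single (Fin.castLE hrm) fun k hk =>
    sum_eq_zero fun σ _ => hvanish k σ (Or.inl hk),
    Fintype.sum_eq_single 1 fun σ hσ => hvanish _ σ (Or.inr hσ)]
  simp [Fin.castLE_injective, hbd]

theorem exists_eq_minorTermExp_of_mem_support {μ : MyVar m n →₀ ℕ}
    (hμ : μ ∈ (Matrix.of fun i j : Fin r => Zmat K m n b (c i) (d j)).det.support) :
    ∃ k : Fin r → Fin m, ∃ σ : Equiv.Perm (Fin r),
      Function.Injective k ∧ minorTermExp c d (k ∘ σ) k = μ := by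
  rw [mem_support_iff, coeff_det_minor] at hμ
  obtain ⟨k, -, hk⟩ := exists_ne_zero_of_sum_ne_zero hμ
  obtain ⟨σ, -, hσ⟩ := exists_ne_zero_of_sum_ne_zero hk
  refine ⟨k, σ, ?_⟩
  split_ifs at hσ with h1 h2
  exacts [⟨h2.1, h1⟩, absurd rfl hσ, absurd rfl hσ]

end Minor

theorem stmt_7_general (K : Type) [Field K] (m n : ℕ)
    (b : Fin m → Fin n)
    (r : ℕ) (hrm : r ≤ m) (c : Fin r → Fin m) (d : Fin r → Fin n)
    (hc : StrictMono c) (hd : StrictMono d)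
    (hbd : ∀ j : Fin r, b (Fin.castLE hrm j) ≤ d j) :
    IsLeadingMonomial
      ((Matrix.of fun i j : Fin r => Zmat K m n b (c i) (d j)).det)
      (∑ j : Fin r, (Finsupp.single (wvar (c j) (Fin.castLE hrm j)) 1 +
        Finsupp.single (uvar (Fin.castLE hrm j) (d j)) 1)) := by
  have hT : ∑ j : Fin r, (Finsupp.single (wvar (c j) (Fin.castLE hrm j)) 1 +
      Finsupp.single (uvar (Fin.castLE hrm j) (d j)) 1) =
      minorTermExp c d (Fin.castLE hrm) (Fin.castLE hrm) :=
    Finset.sum_add_distrib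
  rw [hT]
  refine ⟨by simp [MvPolynomial.mem_support_iff, coeff_det_minor_diagonal hrm hc hd hbd],
    fun μ hμ hne => ?_⟩
  obtain ⟨k, σ, hk, rfl⟩ := exists_eq_minorTermExp_of_mem_support hμ
  have hlt := minorTermExp_comp_perm_lt hrm hc hd hk (σ := σ) <| by
    by_contra! h
    exact hne (by rw [h.1, h.2]; rfl)
  exact Or.inr ⟨(degree_minorTermExp c d _ _).trans (degree_minorTermExp c d _ _).symm, hlt⟩

/-- For `[c₁,…,c_r | d₁,…,d_r] ∈ Δ(m×n;γ*)` (i.e. `d_j ≥ b_j` for all `j`), the leading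
monomial of the minor `[c₁,…,c_r | d₁,…,d_r]_{Z_γ}` for the degree lexicographic order is
`∏_{j=1}^r W_{c_j,j} U_{j,d_j}`. -/
theorem stmt_7 (K : Type) [Field K] (m n : ℕ) (hm : 0 < m) (hmn : m ≤ n)
    (b : Fin m → Fin n) (hb : StrictMono b)
    (r : ℕ) (hr : 1 ≤ r) (hrm : r ≤ m) (c : Fin r → Fin m) (d : Fin r → Fin n)
    (hc : StrictMono c) (hd : StrictMono d)
    (hbd : ∀ j : Fin r, b (Fin.castLE hrm j) ≤ d j) :
    IsLeadingMonomial
      ((Matrix.of fun i j : Fin r => Zmat K m n b (c i) (d j)).det)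
      (∑ j : Fin r, (Finsupp.single (wvar (c j) (Fin.castLE hrm j)) 1 +
        Finsupp.single (uvar (Fin.castLE hrm j) (d j)) 1)) :=
  stmt_7_general K m n b r hrm c d hc hd hbd
end DiagonalExponent
end

section
/- For every 1 ≤ r ≤ m and all indices 1 ≤ c₁ < ⋯ < c_r ≤ m and 1 ≤ d₁ < ⋯ < d_r ≤ m, the leading monomial of the minor [c₁,…,c_r | d₁,…,d_r]_{WᵀW} of WᵀW is lm([c₁,…,c_r | d₁,…,d_r]_{WᵀW}) = ∏_{j=1}^{r} W_{j, c_j} · W_{j, d_j}. -/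
open MvPolynomial Matrix

/-- The variables `W_{ij}` (a type synonym of `Fin m × Fin m`, carrying the variable order
`W₁₁ > W₂₁ > ⋯ > W_{m1} > W₁₂ > ⋯ > W_{mm}`, most significant variable smallest). -/
def WVar (m : ℕ) : Type := Fin m × Fin m

/-- The variable `W_{ij}`. -/
def wv {m : ℕ} (i j : Fin m) : WVar m := (i, j)

/-- Rank of a variable in the significance list `W₁₁ > W₂₁ > ⋯ > W_{mm}`. -/
def wRank (m : ℕ) : WVar m → ℕ := fun v =>
  match v with
  | (i, j) => (i : ℕ) + (j : ℕ) * m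

theorem wRank_injective (m : ℕ) : Function.Injective (wRank m) := by
  rintro ⟨i, j⟩ ⟨i', j'⟩ h
  simp only [wRank] at h
  have hm : 0 < m := i.pos
  have h1 : (i : ℕ) = (i' : ℕ) := by
    have := congrArg (· % m) h
    simpa [Nat.add_mul_mod_self_right, Nat.mod_eq_of_lt i.isLt,
      Nat.mod_eq_of_lt i'.isLt] using this
  have h2 : (j : ℕ) = (j' : ℕ) := by
    rw [h1] at h
    exact Nat.eq_of_mul_eq_mul_right hm (Nat.add_left_cancel h)
  have : i = i' := Fin.ext h1
  have : j = j' := Fin.ext h2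
  subst_vars
  rfl

/-- The variable order `W₁₁ > W₂₁ > ⋯ > W_{mm}` (most significant variable least). -/
instance (m : ℕ) : LinearOrder (WVar m) := LinearOrder.lift' (wRank m) (wRank_injective m)

/-- The `m × m` matrix `W` of indeterminates. -/
noncomputable def WmatS (K : Type) [Field K] (m : ℕ) :
    Matrix (Fin m) (Fin m) (MvPolynomial (WVar m) K) :=
  fun i j => X (wv i j)

/-!
Expanding the minor of `WᵀW` multilinearly, it is the signed sum, over injective row choices
`κ : Fin r → Fin m` and permutations `τ`, of the monomials
`∏_j W_{κ(τ j), c_j} · ∏_j W_{κ j, d_j}`; non-injective `κ` contribute determinants with two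
equal rows. The lexicographic order on exponents is compatible with addition, so it suffices to
compare each factor `∏_j W_{a_j, c_j}` (with `a` injective and `c` increasing) with
`∏_j W_{j, c_j}`: at the first `p` with `a_p ≠ p`, every row `a_j` with `j ≥ p` exceeds `p`, so
`W_{p, c_p}` divides only the second monomial while both agree on all smaller variables. Hence the
candidate monomial is attained only by `κ = id`, `τ = 1`, with coefficient `1`, and every other
monomial of the same degree `2r` is lexicographically smaller.
-/

lemma wv_lt_wv_of_col_lt {m : ℕ} (i i' : Fin m) {t t' : Fin m} (h : t < t') :
    wv i t < wv i' t' := by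
  show (i : ℕ) + t * m < i' + t' * m
  have hi := i.isLt
  have : ((t : ℕ) + 1) * m ≤ t' * m := Nat.mul_le_mul_right m h
  rw [add_mul, one_mul] at this
  omega

lemma wv_lt_wv_of_row_lt {m : ℕ} {i i' : Fin m} (t : Fin m) (h : i < i') :
    wv i t < wv i' t :=
  Nat.add_lt_add_right h _

noncomputable def prodEntriesExp {m r : ℕ} (a c : Fin r → Fin m) : WVar m →₀ ℕ :=
  ∑ j, Finsupp.single (wv (a j) (c j)) 1

lemma degree_prodEntriesExp {m r : ℕ} (a c : Fin r → Fin m) :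
    (prodEntriesExp a c).degree = r := by
  simp [prodEntriesExp]

theorem toLex_prodEntriesExp_lt {m r : ℕ} (hrm : r ≤ m) {a c : Fin r → Fin m}
    (ha : Function.Injective a) (hc : StrictMono c) (hne : a ≠ Fin.castLE hrm) :
    toLex (prodEntriesExp a c) < toLex (prodEntriesExp (Fin.castLE hrm) c) := by
  obtain ⟨p, hp, hmin⟩ : ∃ p, a p ≠ Fin.castLE hrm p ∧ ∀ j < p, a j = Fin.castLE hrm j := by
    obtain ⟨j, hj⟩ := Function.ne_iff.mp hne
    obtain ⟨p, hp, hmin⟩ :=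
      WellFounded.has_min wellFounded_lt {j | a j ≠ Fin.castLE hrm j} ⟨j, hj⟩
    exact ⟨p, hp, fun j hj => by_contra fun h => hmin j h hj⟩
  have row_ge : ∀ j, p ≤ j → (p : ℕ) ≤ a j := by
    intro j hj
    by_contra! hlt
    have hk := hmin ⟨a j, hlt.trans p.isLt⟩ hlt
    rw [← ha (hk.trans (Fin.ext rfl))] at hj
    exact (Fin.le_def.mp hj).not_gt hlt
  set v := wv (Fin.castLE hrm p) (c p)
  have hv_le : ∀ j, p ≤ j → v ≤ wv (Fin.castLE hrm j) (c j) := by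
    intro j hj
    rcases hj.eq_or_lt with rfl | hj
    · rfl
    · exact (wv_lt_wv_of_col_lt _ _ (hc hj)).le
  have hv_lt : ∀ j, p ≤ j → v < wv (a j) (c j) := by
    intro j hj
    rcases hj.eq_or_lt with rfl | hj
    · exact wv_lt_wv_of_row_lt _ (lt_of_le_of_ne (row_ge _ le_rfl) (fun h => hp h.symm))
    · exact wv_lt_wv_of_col_lt _ _ (hc hj)
  refine Finsupp.Lex.lt_iff.mpr ⟨v, fun w hw => ?_, ?_⟩
  · simp only [ofLex_toLex, prodEntriesExp, Finsupp.finsetSum_apply]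
    refine Finset.sum_congr rfl fun j _ => ?_
    rcases lt_or_ge j p with hj | hj
    · rw [hmin j hj]
    · rw [Finsupp.single_eq_of_ne (hw.trans (hv_lt j hj)).ne,
        Finsupp.single_eq_of_ne (hw.trans_le (hv_le j hj)).ne]
  · simp only [ofLex_toLex, prodEntriesExp, Finsupp.finsetSum_apply]
    have hzero : ∀ j, v ≠ wv (a j) (c j) := by
      intro j
      rcases lt_or_ge j p with hj | hj
      · rw [hmin j hj]
        exact (wv_lt_wv_of_col_lt _ _ (hc hj)).ne'
      · exact (hv_lt j hj).ne
    rw [Finset.sum_eq_zero fun j _ => Finsupp.single_eq_of_ne (hzero j)]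
    calc 0 < Finsupp.single v 1 v := by simp
      _ ≤ _ := Finset.single_le_sum
        (f := fun j => Finsupp.single (wv (Fin.castLE hrm j) (c j)) 1 v)
        (fun _ _ => Nat.zero_le _) (Finset.mem_univ p)

theorem toLex_prodEntriesExp_le {m r : ℕ} (hrm : r ≤ m) {a c : Fin r → Fin m}
    (ha : Function.Injective a) (hc : StrictMono c) :
    toLex (prodEntriesExp a c) ≤ toLex (prodEntriesExp (Fin.castLE hrm) c) := by
  rcases eq_or_ne a (Fin.castLE hrm) with rfl | hne
  · rfl
  · exact (toLex_prodEntriesExp_lt hrm ha hc hne).le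

theorem toLex_prodEntriesExp_add_lt {m r : ℕ} (hrm : r ≤ m) {a b c d : Fin r → Fin m}
    (ha : Function.Injective a) (hb : Function.Injective b) (hc : StrictMono c)
    (hd : StrictMono d) (hne : a ≠ Fin.castLE hrm ∨ b ≠ Fin.castLE hrm) :
    toLex (prodEntriesExp a c + prodEntriesExp b d)
      < toLex (prodEntriesExp (Fin.castLE hrm) c + prodEntriesExp (Fin.castLE hrm) d) := by
  rw [toLex_add, toLex_add]
  rcases hne with ha' | hb'
  · exact add_lt_add_of_lt_of_le (toLex_prodEntriesExp_lt hrm ha hc ha')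
      (toLex_prodEntriesExp_le hrm hb hd)
  · exact add_lt_add_of_le_of_lt (toLex_prodEntriesExp_le hrm ha hc)
      (toLex_prodEntriesExp_lt hrm hb hd hb')

lemma degLexLt_irrefl {σ : Type*} [LinearOrder σ] (a : σ →₀ ℕ) : ¬degLexLt a a := by
  rintro (h | ⟨-, h⟩) <;> exact lt_irrefl _ h

lemma degLexLt_of_toLex_lt {σ : Type*} [LinearOrder σ] {a b : σ →₀ ℕ}
    (hdeg : a.degree = b.degree) (h : toLex a < toLex b) : degLexLt a b :=
  Or.inr ⟨hdeg, h⟩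

theorem isLeadingMonomial_sum_monomial {σ ι K : Type*} [LinearOrder σ] [CommSemiring K]
    {s : Finset ι} {e : ι → σ →₀ ℕ} {k : ι → K} {i₀ : ι} (hi₀ : i₀ ∈ s) (hk : k i₀ ≠ 0)
    (hlt : ∀ i ∈ s, i ≠ i₀ → degLexLt (e i) (e i₀)) :
    IsLeadingMonomial (∑ i ∈ s, monomial (e i) (k i)) (e i₀) := by
  classical
  refine ⟨?_, fun d hd hd₀ => ?_⟩
  · rw [mem_support_iff, coeff_sum, Finset.sum_eq_single_of_mem i₀ hi₀, coeff_monomial,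
      if_pos rfl]
    · exact hk
    · intro i hi hne
      rw [coeff_monomial, if_neg fun h => degLexLt_irrefl _ (h ▸ hlt i hi hne)]
  · obtain ⟨i, hi, hdi⟩ := Finset.mem_biUnion.mp (support_sum hd)
    obtain rfl := Finset.mem_singleton.mp (support_monomial_subset hdi)
    exact hlt i hi fun h => hd₀ (h ▸ rfl)

theorem det_transpose_mul_eq_sum {ι n R : Type*} [Fintype ι] [DecidableEq ι] [Fintype n]
    [DecidableEq n] [CommRing R] (A B : Matrix ι n R) :
    (Aᵀ * B).det = ∑ p : n → ι, (A.submatrix p id).det * ∏ i, B (p i) i := by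
  simp only [← det_transpose (A.submatrix _ id), det_apply', mul_apply, transpose_apply,
    submatrix_apply, id, Finset.prod_univ_sum, Fintype.piFinset_univ, Finset.mul_sum,
    Finset.sum_mul, Finset.prod_mul_distrib, mul_assoc]
  exact Finset.sum_comm

lemma prod_X_wv_eq_monomial {R : Type*} [CommSemiring R] {m r : ℕ} (a c : Fin r → Fin m) :
    ∏ i, (X (wv (a i) (c i)) : MvPolynomial (WVar m) R) = monomial (prodEntriesExp a c) 1 := by
  rw [prodEntriesExp, monomial_sum_one]
  rfl

theorem minor_eq_sum_monomial (K : Type) [Field K] {m r : ℕ} (c d : Fin r → Fin m) :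
    (Matrix.of fun i j : Fin r => ((WmatS K m)ᵀ * WmatS K m) (c i) (d j)).det
      = ∑ x ∈ (Finset.univ.filter fun p : Fin r → Fin m => Function.Injective p) ×ˢ
          (Finset.univ : Finset (Equiv.Perm (Fin r))),
          monomial (prodEntriesExp (fun j => x.1 (x.2 j)) c + prodEntriesExp x.1 d)
            ((Equiv.Perm.sign x.2 : ℤ) : K) := by
  have hmat : (Matrix.of fun i j : Fin r => ((WmatS K m)ᵀ * WmatS K m) (c i) (d j))
      = ((WmatS K m).submatrix id c)ᵀ * (WmatS K m).submatrix id d := by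
    ext i j
    simp [mul_apply]
  rw [Finset.sum_product, Finset.sum_filter, hmat, det_transpose_mul_eq_sum]
  refine Finset.sum_congr rfl fun p _ => ?_
  split_ifs with hp
  · rw [det_apply', Finset.sum_mul]
    refine Finset.sum_congr rfl fun τ _ => ?_
    simp only [submatrix_apply, id, WmatS]
    rw [prod_X_wv_eq_monomial (fun i => p (τ i)) c, prod_X_wv_eq_monomial p d, mul_assoc,
      monomial_mul, one_mul, ← map_intCast (C : K →+* MvPolynomial (WVar m) K),
      C_mul_monomial, mul_one]
  · obtain ⟨i, j, hij, hne⟩ := Function.not_injective_iff.mp hp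
    rw [det_zero_of_row_eq hne (funext fun k => by simp [hij]), zero_mul]

theorem stmt_8_general (K : Type) [Field K] (m : ℕ)
    (r : ℕ) (hrm : r ≤ m) (c d : Fin r → Fin m)
    (hc : StrictMono c) (hd : StrictMono d) :
    IsLeadingMonomial
      ((Matrix.of fun i j : Fin r => ((WmatS K m)ᵀ * WmatS K m) (c i) (d j)).det)
      (∑ j : Fin r, (Finsupp.single (wv (Fin.castLE hrm j) (c j)) 1 +
        Finsupp.single (wv (Fin.castLE hrm j) (d j)) 1)) := by
  have hcast := Fin.castLE_injective hrm
  rw [Finset.sum_add_distrib, minor_eq_sum_monomial]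
  refine isLeadingMonomial_sum_monomial (i₀ := (Fin.castLE hrm, 1)) (by simp [hcast]) (by simp) ?_
  rintro ⟨p, τ⟩ hpτ hne
  have hp : Function.Injective p := by simpa using hpτ
  refine degLexLt_of_toLex_lt (by simp [degree_prodEntriesExp])
    (toLex_prodEntriesExp_add_lt hrm (hp.comp τ.injective) hp hc hd ?_)
  by_contra! h
  obtain ⟨hpτ, rfl⟩ := h
  exact hne (Prod.ext rfl (Equiv.ext fun j => hcast (congrFun hpτ j)))

/-- The leading monomial of the minor `[c₁,…,c_r | d₁,…,d_r]_{WᵀW}` for the degree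
lexicographic order with `W₁₁ > W₂₁ > ⋯ > W_{m1} > W₁₂ > ⋯ > W_{mm}` is
`∏_{j=1}^r W_{j,c_j} W_{j,d_j}`. -/
theorem stmt_8 (K : Type) [Field K] (m : ℕ) (hm : 1 ≤ m)
    (r : ℕ) (hr : 1 ≤ r) (hrm : r ≤ m) (c d : Fin r → Fin m)
    (hc : StrictMono c) (hd : StrictMono d) :
    IsLeadingMonomial
      ((Matrix.of fun i j : Fin r => ((WmatS K m)ᵀ * WmatS K m) (c i) (d j)).det)
      (∑ j : Fin r, (Finsupp.single (wv (Fin.castLE hrm j) (c j)) 1 +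
        Finsupp.single (wv (Fin.castLE hrm j) (d j)) 1)) :=
  stmt_8_general K m r hrm c d hc hd
end

section
/- The generalized doset Hibi ring 𝒟_K(H,Q), defined as the K-linear span in K[T_x : x ∈ P] of the monomials T^ν with ν : P → ℕ order reversing and ν(y) even for every y ∈ Q, is equal to the K-subalgebra of K[T_x : x ∈ P] generated by the set {e(α)·e(β) : α, β ∈ H₁, α ≤ β, ψ(α) = ψ(β)} ∪ {e(α) : α ∈ H₂}. -/
open scoped Classical

lemma joinIrred_le_sup {H : Type*} [DistribLattice H] {x a b : H}
    (h : JoinIrred x) (hle : x ≤ a ⊔ b) : x ≤ a ∨ x ≤ b := by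
  have hx : x = (x ⊓ a) ⊔ (x ⊓ b) := by
    rw [← inf_sup_left]
    exact (inf_eq_left.mpr hle).symm
  rcases h _ _ hx with h1 | h1
  · exact Or.inl (by rw [h1]; exact inf_le_right)
  · exact Or.inr (by rw [h1]; exact inf_le_right)

lemma joinIrred_le_sup' {H : Type*} [DistribLattice H] {ι : Type*} {x : H}
    (h : JoinIrred x) (S : Finset ι) (f : ι → H) :
    ∀ (hS : S.Nonempty), x ≤ S.sup' hS f → ∃ z ∈ S, x ≤ f z := by
  induction S using Finset.cons_induction with
  | empty => intro hS; exact absurd hS (by simp)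
  | cons a s ha ih =>
    intro hS hle
    rcases s.eq_empty_or_nonempty with rfl | hs
    · refine ⟨a, Finset.mem_cons_self a _, ?_⟩
      simpa using hle
    · rw [Finset.sup'_cons hs] at hle
      rcases joinIrred_le_sup h hle with h1 | h1
      · exact ⟨a, Finset.mem_cons_self a _, h1⟩
      · obtain ⟨z, hz, hz2⟩ := ih hs h1
        exact ⟨z, Finset.mem_cons_of_mem hz, hz2⟩

lemma le_levelSup_iff {H : Type*} [DistribLattice H] [Fintype H]
    {ν : {x : H // JoinIrred x} → ℕ}
    (hrev : ∀ x y : {x : H // JoinIrred x}, (x : H) ≤ (y : H) → ν y ≤ ν x)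
    {i : ℕ}
    (hS : (Finset.univ.filter fun z : {x : H // JoinIrred x} => i ≤ ν z).Nonempty)
    (x : {x : H // JoinIrred x}) :
    (x : H) ≤ (Finset.univ.filter fun z : {x : H // JoinIrred x} => i ≤ ν z).sup' hS
      (fun z => (z : H)) ↔ i ≤ ν x := by
  constructor
  · intro h
    obtain ⟨z, hz, hxz⟩ := joinIrred_le_sup' x.2 _ _ hS h
    exact le_trans (Finset.mem_filter.1 hz).2 (hrev x z hxz)
  · intro h
    exact Finset.le_sup' (fun z : {x : H // JoinIrred x} => (z : H))
      (Finset.mem_filter.2 ⟨Finset.mem_univ x, h⟩)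


lemma Tpow_add_s10 {H : Type*} [DistribLattice H] [Fintype H] (K : Type*) [Field K]
    (f g : {x : H // JoinIrred x} → ℕ) :
    Tpow K (fun x => f x + g x) = Tpow K f * Tpow K g := by
  unfold Tpow
  rw [← Finset.prod_mul_distrib]
  exact Finset.prod_congr rfl fun x _ => pow_add _ _ _

lemma hibiGen_eq_Tpow_s10 {H : Type*} [DistribLattice H] [Fintype H] (K : Type*) [Field K]
    (α : H) :
    hibiGen K α = Tpow K (fun x => if (x : H) ≤ α then 1 else 0) := by
  unfold Tpow hibiGen
  refine Finset.prod_congr rfl fun x _ => ?_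
  by_cases h : (x : H) ≤ α <;> simp [h]

lemma tpow_mem_adjoin {H : Type*} [DistribLattice H] [Fintype H] (K : Type*) [Field K]
    (Q : Set {x : H // JoinIrred x}) (y₀ : {x : H // JoinIrred x})
    (hy₀Q : y₀ ∈ Q) (hy₀min : ∀ y ∈ Q, (y₀ : H) ≤ (y : H)) :
    ∀ n : ℕ, ∀ ν : {x : H // JoinIrred x} → ℕ, (∑ x, ν x) ≤ n →
      (∀ x y : {x : H // JoinIrred x}, (x : H) ≤ (y : H) → ν y ≤ ν x) →
      (∀ y ∈ Q, Even (ν y)) →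
      Tpow K ν ∈ Algebra.adjoin K
        ({f : MvPolynomial {x : H // JoinIrred x} K |
            ∃ α β : H, (y₀ : H) ≤ α ∧ (y₀ : H) ≤ β ∧ α ≤ β ∧
              {y ∈ Q | (y : H) ≤ α} = {y ∈ Q | (y : H) ≤ β} ∧
              f = hibiGen K α * hibiGen K β} ∪
          {f : MvPolynomial {x : H // JoinIrred x} K |
            ∃ α : H, ¬ (y₀ : H) ≤ α ∧ f = hibiGen K α}) := by
  intro n
  induction n with
  | zero =>
    intro ν hsum _ _
    have h0 : ∀ x, ν x = 0 := by
      intro x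
      have := Finset.single_le_sum (f := ν) (fun i _ => Nat.zero_le _) (Finset.mem_univ x)
      omega
    have h1 : Tpow K ν = 1 := by
      unfold Tpow
      exact Finset.prod_eq_one fun x _ => by rw [h0 x, pow_zero]
    rw [h1]; exact Subalgebra.one_mem _
  | succ n ih =>
    intro ν hsum hrev heven
    by_cases h0 : ∀ x, ν x = 0
    · have h1 : Tpow K ν = 1 := by
        unfold Tpow
        exact Finset.prod_eq_one fun x _ => by rw [h0 x, pow_zero]
      rw [h1]; exact Subalgebra.one_mem _
    · push_neg at h0
      obtain ⟨w, hw⟩ := h0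
      have hw1 : 1 ≤ ν w := Nat.one_le_iff_ne_zero.2 hw
      have hS1 : (Finset.univ.filter fun z : {x : H // JoinIrred x} => 1 ≤ ν z).Nonempty :=
        ⟨w, by simp [hw1]⟩
      set α₁ : H := (Finset.univ.filter fun z : {x : H // JoinIrred x} => 1 ≤ ν z).sup' hS1
        (fun z => (z : H)) with hα₁def
      have hkey1 : ∀ x : {x : H // JoinIrred x}, (x : H) ≤ α₁ ↔ 1 ≤ ν x :=
        fun x => le_levelSup_iff hrev hS1 x
      by_cases hy : ν y₀ = 0
      · -- Case A : take one generator from H₂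
        have hα₁ : ¬ (y₀ : H) ≤ α₁ := fun h => by have := (hkey1 y₀).1 h; omega
        set ν' : {x : H // JoinIrred x} → ℕ := fun x => ν x - 1 with hν'
        have hfun : ν = fun x : {x : H // JoinIrred x} => (if (x : H) ≤ α₁ then 1 else 0) + ν' x := by
          funext x
          have hx := hkey1 x
          split_ifs with h
          · have := hx.1 h; simp only [hν']; omega
          · have h2 : ¬ 1 ≤ ν x := fun h1 => h (hx.2 h1)
            simp only [hν']; omega
        have hrev' : ∀ x y : {x : H // JoinIrred x}, (x : H) ≤ (y : H) → ν' y ≤ ν' x :=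
          fun x y h => Nat.sub_le_sub_right (hrev x y h) 1
        have heven' : ∀ y ∈ Q, Even (ν' y) := by
          intro y hyQ
          have h1 : ν y ≤ ν y₀ := hrev y₀ y (hy₀min y hyQ)
          have : ν' y = 0 := by simp only [hν']; omega
          simp [this]
        have hlt : ∑ x, ν' x < ∑ x, ν x :=
          Finset.sum_lt_sum (fun x _ => Nat.sub_le _ _)
            ⟨w, Finset.mem_univ w, by simp only [hν']; omega⟩
        have heq : Tpow K ν = hibiGen K α₁ * Tpow K ν' := by
          conv_lhs => rw [hfun]
          rw [Tpow_add_s10, hibiGen_eq_Tpow_s10]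
        rw [heq]
        exact mul_mem (Algebra.subset_adjoin (Or.inr ⟨α₁, hα₁, rfl⟩))
          (ih ν' (by omega) hrev' heven')
      · -- Case B : take a doset generator
        have hy2 : 2 ≤ ν y₀ := by
          obtain ⟨k, hk⟩ := heven y₀ hy₀Q
          omega
        have hS2 : (Finset.univ.filter fun z : {x : H // JoinIrred x} => 2 ≤ ν z).Nonempty :=
          ⟨y₀, by simp [hy2]⟩
        set α₂ : H := (Finset.univ.filter fun z : {x : H // JoinIrred x} => 2 ≤ ν z).sup' hS2
          (fun z => (z : H)) with hα₂def
        have hkey2 : ∀ x : {x : H // JoinIrred x}, (x : H) ≤ α₂ ↔ 2 ≤ ν x :=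
          fun x => le_levelSup_iff hrev hS2 x
        have hle21 : α₂ ≤ α₁ := by
          refine Finset.sup'_le _ _ fun z hz => ?_
          have h2 : 2 ≤ ν z := (Finset.mem_filter.1 hz).2
          exact (hkey1 z).2 (by omega)
        have hy₀α₁ : (y₀ : H) ≤ α₁ := (hkey1 y₀).2 (by omega)
        have hy₀α₂ : (y₀ : H) ≤ α₂ := (hkey2 y₀).2 hy2
        have hψ : {y ∈ Q | (y : H) ≤ α₂} = {y ∈ Q | (y : H) ≤ α₁} := by
          ext y
          simp only [Set.mem_setOf_eq]
          constructor
          · rintro ⟨hq, h⟩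
            exact ⟨hq, (hkey1 y).2 (by have := (hkey2 y).1 h; omega)⟩
          · rintro ⟨hq, h⟩
            obtain ⟨k, hk⟩ := heven y hq
            have := (hkey1 y).1 h
            exact ⟨hq, (hkey2 y).2 (by omega)⟩
        set ν' : {x : H // JoinIrred x} → ℕ := fun x => ν x - 2 with hν'
        have hfun : ν = fun x : {x : H // JoinIrred x} => (if (x : H) ≤ α₁ then 1 else 0) +
            ((if (x : H) ≤ α₂ then 1 else 0) + ν' x) := by
          funext x
          have hx1 := hkey1 x
          have hx2 := hkey2 x
          split_ifs with h1 h2 h2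
          · have := hx1.1 h1; have := hx2.1 h2; simp only [hν']; omega
          · have := hx1.1 h1
            have h3 : ¬ 2 ≤ ν x := fun h => h2 (hx2.2 h)
            simp only [hν']; omega
          · exact absurd (le_trans h2 hle21) h1
          · have h3 : ¬ 1 ≤ ν x := fun h => h1 (hx1.2 h)
            simp only [hν']; omega
        have hrev' : ∀ x y : {x : H // JoinIrred x}, (x : H) ≤ (y : H) → ν' y ≤ ν' x :=
          fun x y h => Nat.sub_le_sub_right (hrev x y h) 2
        have heven' : ∀ y ∈ Q, Even (ν' y) := by
          intro y hyQ
          obtain ⟨k, hk⟩ := heven y hyQ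
          exact ⟨k - 1, by simp only [hν']; omega⟩
        have hlt : ∑ x, ν' x < ∑ x, ν x :=
          Finset.sum_lt_sum (fun x _ => Nat.sub_le _ _)
            ⟨y₀, Finset.mem_univ y₀, by simp only [hν']; omega⟩
        have heq : Tpow K ν = (hibiGen K α₂ * hibiGen K α₁) * Tpow K ν' := by
          conv_lhs => rw [hfun]
          rw [Tpow_add_s10, Tpow_add_s10, hibiGen_eq_Tpow_s10 K α₁, hibiGen_eq_Tpow_s10 K α₂]
          ring
        rw [heq]
        exact mul_mem
          (Algebra.subset_adjoin (Or.inl ⟨α₂, α₁, hy₀α₂, hy₀α₁, hle21, hψ, rfl⟩))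
          (ih ν' (by omega) hrev' heven')

lemma ite_le_ite_nat {c d : Prop} [Decidable c] [Decidable d] (h : c → d) :
    (if c then 1 else 0 : ℕ) ≤ if d then 1 else 0 := by
  split_ifs <;> simp_all

/-- Let `H` be a finite distributive lattice with join-irreducibles `P`, and `Q ⊆ P` with
minimum element `y₀`.  Put `H₁ := {α | y₀ ≤ α}`, `H₂ := H ∖ H₁`, `ψ α := {y ∈ Q | y ≤ α}`.
The generalized doset Hibi ring `𝒟_K(H,Q)`, the span of the monomials `T^ν` with
`ν : P → ℕ` order reversing and `ν y` even for every `y ∈ Q`, equals the `K`-subalgebra of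
`K[T_x : x ∈ P]` generated by `{e(α)e(β) : α, β ∈ H₁, α ≤ β, ψ α = ψ β} ∪ {e(α) : α ∈ H₂}`. -/
theorem stmt_10 {H : Type*} [DistribLattice H] [Fintype H] (K : Type*) [Field K]
    (Q : Set {x : H // JoinIrred x}) (y₀ : {x : H // JoinIrred x})
    (hy₀Q : y₀ ∈ Q) (hy₀min : ∀ y ∈ Q, (y₀ : H) ≤ (y : H)) :
    Submodule.span K {f : MvPolynomial {x : H // JoinIrred x} K |
        ∃ ν : {x : H // JoinIrred x} → ℕ,
          (∀ x y : {x : H // JoinIrred x}, (x : H) ≤ (y : H) → ν y ≤ ν x) ∧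
          (∀ y ∈ Q, Even (ν y)) ∧ f = Tpow K ν} =
      (Algebra.adjoin K
        ({f : MvPolynomial {x : H // JoinIrred x} K |
            ∃ α β : H, (y₀ : H) ≤ α ∧ (y₀ : H) ≤ β ∧ α ≤ β ∧
              {y ∈ Q | (y : H) ≤ α} = {y ∈ Q | (y : H) ≤ β} ∧
              f = hibiGen K α * hibiGen K β} ∪
          {f : MvPolynomial {x : H // JoinIrred x} K |
            ∃ α : H, ¬ (y₀ : H) ≤ α ∧ f = hibiGen K α})).toSubmodule := by
  set s : Set (MvPolynomial {x : H // JoinIrred x} K) :=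
    {f | ∃ ν : {x : H // JoinIrred x} → ℕ,
      (∀ x y : {x : H // JoinIrred x}, (x : H) ≤ (y : H) → ν y ≤ ν x) ∧
      (∀ y ∈ Q, Even (ν y)) ∧ f = Tpow K ν} with hs
  set gens : Set (MvPolynomial {x : H // JoinIrred x} K) :=
    ({f | ∃ α β : H, (y₀ : H) ≤ α ∧ (y₀ : H) ≤ β ∧ α ≤ β ∧
        {y ∈ Q | (y : H) ≤ α} = {y ∈ Q | (y : H) ≤ β} ∧
        f = hibiGen K α * hibiGen K β} ∪
      {f | ∃ α : H, ¬ (y₀ : H) ≤ α ∧ f = hibiGen K α}) with hgens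
  -- s is closed under multiplication
  have hsmul : ∀ x ∈ s, ∀ y ∈ s, x * y ∈ s := by
    rintro _ ⟨μ, hμr, hμe, rfl⟩ _ ⟨ν, hνr, hνe, rfl⟩
    exact ⟨fun x => μ x + ν x, fun x y h => add_le_add (hμr x y h) (hνr x y h),
      fun y hy => (hμe y hy).add (hνe y hy), (Tpow_add_s10 K μ ν).symm⟩
  have hone : (1 : MvPolynomial {x : H // JoinIrred x} K) ∈ Submodule.span K s := by
    refine Submodule.subset_span ⟨fun _ => 0, fun _ _ _ => le_rfl, fun _ _ => Even.zero, ?_⟩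
    unfold Tpow; simp
  have hmulspan : ∀ a b : MvPolynomial {x : H // JoinIrred x} K,
      a ∈ Submodule.span K s → b ∈ Submodule.span K s → a * b ∈ Submodule.span K s := by
    intro a b ha hb
    have h2 : Submodule.span K s * Submodule.span K s ≤ Submodule.span K s := by
      rw [Submodule.span_mul_span]
      exact Submodule.span_mono (Set.mul_subset_iff.2 hsmul)
    exact h2 (Submodule.mul_mem_mul ha hb)
  -- generators are in s
  have hgs : gens ⊆ s := by
    rintro f (⟨α, β, hα, hβ, hab, hψ, rfl⟩ | ⟨α, hα, rfl⟩)
    · refine ⟨fun x => (if (x : H) ≤ α then 1 else 0) + (if (x : H) ≤ β then 1 else 0),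
        ?_, ?_, ?_⟩
      · intro x y h
        exact add_le_add (ite_le_ite_nat fun h1 => h.trans h1)
          (ite_le_ite_nat fun h1 => h.trans h1)
      · intro y hy
        have hiff : (y : H) ≤ α ↔ (y : H) ≤ β := by
          have := Set.ext_iff.1 hψ y
          simpa [hy] using this
        by_cases h1 : (y : H) ≤ α
        · simp [h1, hiff.1 h1]
        · have h2 : ¬ (y : H) ≤ β := fun h => h1 (hiff.2 h)
          simp [h1, h2]
      · rw [Tpow_add_s10, hibiGen_eq_Tpow_s10 K α, hibiGen_eq_Tpow_s10 K β]
    · refine ⟨fun x => if (x : H) ≤ α then 1 else 0, ?_, ?_, hibiGen_eq_Tpow_s10 K α⟩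
      · intro x y h
        exact ite_le_ite_nat fun h1 => h.trans h1
      · intro y hy
        have h1 : ¬ (y : H) ≤ α := fun h => hα ((hy₀min y hy).trans h)
        simp [h1]
  refine le_antisymm ?_ ?_
  · rw [Submodule.span_le]
    rintro f ⟨ν, hrev, heven, rfl⟩
    exact tpow_mem_adjoin K Q y₀ hy₀Q hy₀min (∑ x, ν x) ν le_rfl hrev heven
  · have hadj : Algebra.adjoin K gens ≤
        (Submodule.span K s).toSubalgebra hone hmulspan :=
      Algebra.adjoin_le fun f hf => Submodule.subset_span (hgs hf)
    intro f hf
    exact hadj hf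
end

section
/- Let α₁ ≤ α₂ ≤ ⋯ ≤ α_r be a chain of elements of H and let 0 ≤ s ≤ r be such that α_j ∉ H₁ for j ≤ s and α_j ∈ H₁ for j > s. Define ν : P → ℕ by ν(x) := #{j ∈ {1,…,r} : x ≤ α_j} (an order reversing map). Then ν(y) is even for every y ∈ Q if and only if r − s is even and ψ(α_{s+2i−1}) = ψ(α_{s+2i}) for every i = 1, 2, …, (r−s)/2. -/
open scoped Classical

/-- The set of indices `j` with `y ≤ α j` is an upper set, hence equals `Ici` of its min. -/
theorem upset_eq_Ici {H : Type*} [Preorder H] {r : ℕ} {α : Fin r → H} (hchain : Monotone α)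
    (y : H) (hne : (Finset.univ.filter fun j : Fin r => y ≤ α j).Nonempty) :
    (Finset.univ.filter fun j : Fin r => y ≤ α j) =
      Finset.Ici ((Finset.univ.filter fun j : Fin r => y ≤ α j).min' hne) := by
  ext j
  simp only [Finset.mem_filter, Finset.mem_univ, true_and, Finset.mem_Ici]
  constructor
  · intro hj
    exact Finset.min'_le _ _ (by simp [hj])
  · intro hj
    have hmem := Finset.min'_mem _ hne
    have := (Finset.mem_filter.mp hmem).2
    exact this.trans (hchain hj)

/-- Let `H` be a finite distributive lattice, `Q` a set of join-irreducible elements of `H`,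
`H₁ := {α | ∃ y ∈ Q, y ≤ α}` and `ψ α := {y ∈ Q | y ≤ α}`.  Let `α₁ ≤ ⋯ ≤ α_r` be a chain
in `H` with `α_j ∉ H₁` exactly for `j ≤ s`, and let `ν x := #{j : x ≤ α_j}` (an order
reversing map on the join-irreducibles).  Then `ν y` is even for every `y ∈ Q` if and only
if `r − s` is even and `ψ (α_{s+2i−1}) = ψ (α_{s+2i})` for `i = 1, …, (r−s)/2`. -/
theorem stmt_11 {H : Type*} [DistribLattice H] [Fintype H] (Q : Set H)
    (hQ : ∀ y ∈ Q, JoinIrred y) (r s : ℕ) (hsr : s ≤ r) (α : Fin r → H)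
    (hchain : Monotone α)
    (hH₂ : ∀ j : Fin r, (j : ℕ) < s → ¬ ∃ y ∈ Q, y ≤ α j)
    (hH₁ : ∀ j : Fin r, s ≤ (j : ℕ) → ∃ y ∈ Q, y ≤ α j) :
    (∀ y ∈ Q, Even ((Finset.univ.filter fun j : Fin r => y ≤ α j).card)) ↔
      (Even (r - s) ∧ ∀ i : ℕ, ∀ h : s + 2 * i + 1 < r,
        {y ∈ Q | y ≤ α ⟨s + 2 * i, by omega⟩} = {y ∈ Q | y ≤ α ⟨s + 2 * i + 1, h⟩}) := by
  -- general card formula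
  have key : ∀ y ∈ Q, ∀ hne : (Finset.univ.filter fun j : Fin r => y ≤ α j).Nonempty,
      s ≤ ((Finset.univ.filter fun j : Fin r => y ≤ α j).min' hne : ℕ) ∧
      (Finset.univ.filter fun j : Fin r => y ≤ α j).card =
        r - ((Finset.univ.filter fun j : Fin r => y ≤ α j).min' hne : ℕ) := by
    intro y hyQ hne
    set t := (Finset.univ.filter fun j : Fin r => y ≤ α j).min' hne with ht
    have hmem := Finset.min'_mem _ hne
    have hyt : y ≤ α t := (Finset.mem_filter.mp hmem).2
    constructor
    · by_contra hlt
      push_neg at hlt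
      exact hH₂ t hlt ⟨y, hyQ, hyt⟩
    · rw [upset_eq_Ici hchain y hne, Fin.card_Ici]
  constructor
  · intro hL
    have hrs : Even (r - s) := by
      rcases lt_or_ge s r with hsr' | hge
      · obtain ⟨y, hyQ, hy⟩ := hH₁ ⟨s, hsr'⟩ (le_refl s)
        have hne : (Finset.univ.filter fun j : Fin r => y ≤ α j).Nonempty :=
          ⟨⟨s, hsr'⟩, by simp [hy]⟩
        obtain ⟨hts, hcard⟩ := key y hyQ hne
        have htle : ((Finset.univ.filter fun j : Fin r => y ≤ α j).min' hne : ℕ) ≤ s := by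
          have h1 : (Finset.univ.filter fun j : Fin r => y ≤ α j).min' hne ≤ (⟨s, hsr'⟩ : Fin r) :=
            Finset.min'_le _ _ (by simp [hy])
          exact h1
        have heq : ((Finset.univ.filter fun j : Fin r => y ≤ α j).min' hne : ℕ) = s :=
          le_antisymm htle hts
        have := hL y hyQ
        rw [hcard, heq] at this
        exact this
      · have : r - s = 0 := by omega
        simp [this]
    refine ⟨hrs, ?_⟩
    intro i h
    ext y
    simp only [Set.mem_setOf_eq]
    constructor
    · rintro ⟨hyQ, hy⟩
      exact ⟨hyQ, hy.trans (hchain (by simp [Fin.le_def]))⟩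
    · rintro ⟨hyQ, hy⟩
      refine ⟨hyQ, ?_⟩
      by_contra hn
      have hne : (Finset.univ.filter fun j : Fin r => y ≤ α j).Nonempty :=
        ⟨⟨s + 2 * i + 1, h⟩, by simp [hy]⟩
      obtain ⟨hts, hcard⟩ := key y hyQ hne
      set t := (Finset.univ.filter fun j : Fin r => y ≤ α j).min' hne with ht
      -- t = s + 2i + 1
      have htle : (t : ℕ) ≤ s + 2 * i + 1 := by
        have h1 : (Finset.univ.filter fun j : Fin r => y ≤ α j).min' hne ≤ (⟨s + 2 * i + 1, h⟩ : Fin r) :=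
          Finset.min'_le _ _ (by simp [hy])
        exact h1
      have htge : s + 2 * i + 1 ≤ (t : ℕ) := by
        by_contra hlt
        push_neg at hlt
        -- then t ≤ s + 2i, so y ≤ α t ≤ α ⟨s+2i⟩, contradicting hn
        have hyt : y ≤ α t := (Finset.mem_filter.mp (Finset.min'_mem _ hne)).2
        have : y ≤ α ⟨s + 2 * i, by omega⟩ :=
          hyt.trans (hchain (by simp [Fin.le_def]; omega))
        exact hn this
      have hteq : (t : ℕ) = s + 2 * i + 1 := le_antisymm htle htge
      have hLy := hL y hyQ
      rw [hcard, hteq] at hLy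
      rw [Nat.even_iff] at hLy hrs
      omega
  · rintro ⟨hrs, hpsi⟩ y hyQ
    by_cases hne : (Finset.univ.filter fun j : Fin r => y ≤ α j).Nonempty
    · obtain ⟨hts, hcard⟩ := key y hyQ hne
      set t := (Finset.univ.filter fun j : Fin r => y ≤ α j).min' hne with ht
      rw [hcard]
      -- claim (t : ℕ) - s is even
      have hparity : Even ((t : ℕ) - s) := by
        by_contra hodd
        rw [Nat.not_even_iff] at hodd
        obtain ⟨i, hi⟩ : ∃ i, (t : ℕ) = s + 2 * i + 1 := ⟨((t : ℕ) - s) / 2, by omega⟩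
        have hlt : s + 2 * i + 1 < r := by
          have := t.isLt; omega
        have hyt : y ≤ α t := (Finset.mem_filter.mp (Finset.min'_mem _ hne)).2
        have hyt' : y ≤ α ⟨s + 2 * i + 1, hlt⟩ := by
          have : t = ⟨s + 2 * i + 1, hlt⟩ := Fin.ext hi
          rwa [this] at hyt
        have hmem : y ∈ {y ∈ Q | y ≤ α ⟨s + 2 * i, by omega⟩} := by
          rw [hpsi i hlt]; exact ⟨hyQ, hyt'⟩
        have hy2 : y ≤ α ⟨s + 2 * i, by omega⟩ := hmem.2
        have : (t : ℕ) ≤ s + 2 * i := by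
          have h1 : (Finset.univ.filter fun j : Fin r => y ≤ α j).min' hne ≤ (⟨s + 2 * i, by omega⟩ : Fin r) :=
            Finset.min'_le _ _ (by simp [hy2])
          exact h1
        omega
      have := t.isLt
      rw [Nat.even_iff] at hparity hrs ⊢
      omega
    · rw [Finset.not_nonempty_iff_eq_empty] at hne
      simp [hne]
end

section
/- Let α, β, α′, β′ ∈ H satisfy α ≤ β, α′ ≤ β′, φ(α) = φ(β), and φ(α′) = φ(β′). Set σ := (α ∨ α′) ∧ (β ∧ β′) and τ := (α ∨ α′) ∨ (β ∧ β′). Then α ∧ α′ ≤ σ ≤ τ ≤ β ∨ β′, φ(σ) = φ(α ∧ α′), and φ(τ) = φ(β ∨ β′). (In particular, the doset D := {(α,β) : α ≤ β, φ(α) = φ(β)} is closed under the straightening relation of the Hibi ring.) -/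
/-- Let `H`, `L` be lattices and `φ : H → L` a lattice homomorphism.  If `α ≤ β`,
`α′ ≤ β′`, `φ α = φ β` and `φ α′ = φ β′`, then, setting `σ := (α ⊔ α′) ⊓ (β ⊓ β′)` and
`τ := (α ⊔ α′) ⊔ (β ⊓ β′)`, we have `α ⊓ α′ ≤ σ ≤ τ ≤ β ⊔ β′`, `φ σ = φ (α ⊓ α′)` and
`φ τ = φ (β ⊔ β′)`. -/
theorem stmt_14 {H L : Type*} [Lattice H] [Lattice L] (φ : H → L)
    (hsup : ∀ a b : H, φ (a ⊔ b) = φ a ⊔ φ b) (hinf : ∀ a b : H, φ (a ⊓ b) = φ a ⊓ φ b)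
    (α β α' β' : H) (hαβ : α ≤ β) (hαβ' : α' ≤ β') (hφ1 : φ α = φ β) (hφ2 : φ α' = φ β') :
    α ⊓ α' ≤ (α ⊔ α') ⊓ (β ⊓ β') ∧
    (α ⊔ α') ⊓ (β ⊓ β') ≤ (α ⊔ α') ⊔ (β ⊓ β') ∧
    (α ⊔ α') ⊔ (β ⊓ β') ≤ β ⊔ β' ∧
    φ ((α ⊔ α') ⊓ (β ⊓ β')) = φ (α ⊓ α') ∧
    φ ((α ⊔ α') ⊔ (β ⊓ β')) = φ (β ⊔ β') := by
  refine ⟨?_, inf_le_left.trans le_sup_left, ?_, ?_, ?_⟩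
  · exact le_inf (le_trans inf_le_left le_sup_left)
      (le_inf (le_trans inf_le_left hαβ) (le_trans inf_le_right hαβ'))
  · exact sup_le (sup_le (le_trans hαβ le_sup_left) (le_trans hαβ' le_sup_right))
      (le_trans inf_le_left le_sup_left)
  · rw [hinf, hsup, hinf, hinf, ← hφ1, ← hφ2]
    exact inf_eq_right.mpr (inf_le_left.trans le_sup_left)
  · rw [hsup, hsup, hinf, hsup β β', hφ1, hφ2]
    exact sup_eq_left.mpr ((inf_le_left : φ β ⊓ φ β' ≤ φ β).trans le_sup_left)
end
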